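/- arXiv:1702.03561 — 5 statements merged into one kernel-verified Lean document; each statement's English description precedes it below -/
import Mathlib

section
/- Let (Ω,𝒜,ℙ) be a probability space, Q ∈ L²(Ω) a real random variable, and (Q_ℓ)_{ℓ≥0} ⊂ L²(Ω) a sequence of approximations associated with mesh sizes h_ℓ = 2^{-ℓ} h₀ (h₀ > 0). Set Y₀ := Q₀ and Y_ℓ := Q_ℓ − Q_{ℓ−1} for ℓ ≥ 1, and let 𝒞_ℓ ≥ 0 denote the cost of computing one sample of Y_ℓ. Assume there are constants α, β, γ, c₁, c₂, c₃ > 0 with α ≥ ½·min(β,γ) and β ≠ γ such that for all ℓ ≥ 0: |E[Q − Q_ℓ]| ≤ c₁ h_ℓ^α, Var[Y_ℓ] ≤ c₂ h_ℓ^β, and 𝒞_ℓ ≤ c₃ h_ℓ^{−γ}. Then there exists a constant C > 0 such that for every ε ∈ (0,1) there exist a level L ∈ ℕ and positive integers N₀,…,N_L with (E[Q − Q_L])² + Σ_{ℓ=0}^L Var[Y_ℓ]/N_ℓ ≤ ε² (i.e. the multilevel Monte Carlo estimator using N_ℓ mutually independent samples of Y_ℓ on each level has mean square error at most ε²) and total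 cost Σ_{ℓ=0}^L N_ℓ 𝒞_ℓ ≤ C ε^{−2 − max(0, (γ−β)/α)}. -/
open MeasureTheory ProbabilityTheory Finset
open Real

lemma geom_bound (a : ℝ) (ha : a ≠ 0) :
    ∃ G > 0, ∀ L : ℕ, ∑ ℓ ∈ Finset.range (L+1), (2:ℝ) ^ ((ℓ:ℝ) * a)
      ≤ G * ((2:ℝ) ^ (L:ℝ)) ^ (max a 0) := by
  have h2 : (0:ℝ) < 2 := two_pos
  set r : ℝ := (2:ℝ) ^ a with hr
  have hrpos : 0 < r := rpow_pos_of_pos h2 a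
  have hterm : ∀ ℓ : ℕ, (2:ℝ) ^ ((ℓ:ℝ) * a) = r ^ ℓ := by
    intro ℓ
    rw [mul_comm, Real.rpow_mul h2.le, Real.rpow_natCast]
  rcases lt_or_gt_of_ne ha with hneg | hpos
  · have hr1 : r < 1 := Real.rpow_lt_one_of_one_lt_of_neg one_lt_two hneg
    refine ⟨1 / (1 - r), div_pos one_pos (by linarith), fun L => ?_⟩
    have hmax : max a 0 = 0 := max_eq_right hneg.le
    rw [hmax, Real.rpow_zero, mul_one]
    calc ∑ ℓ ∈ Finset.range (L+1), (2:ℝ) ^ ((ℓ:ℝ) * a)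
        = ∑ ℓ ∈ Finset.range (L+1), r ^ ℓ := by simp_rw [hterm]
      _ = (r ^ (L+1) - 1) / (r - 1) := geom_sum_eq hr1.ne (L+1)
      _ = (1 - r ^ (L+1)) / (1 - r) := by rw [← neg_div_neg_eq]; ring_nf
      _ ≤ 1 / (1 - r) := by
          have hrn : 0 ≤ r ^ (L+1) := by positivity
          gcongr
          · linarith
  · have hr1 : 1 < r := (Real.one_lt_rpow_iff_of_pos h2).mpr (Or.inl ⟨one_lt_two, hpos⟩)
    refine ⟨r / (r - 1), div_pos hrpos (by linarith), fun L => ?_⟩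
    have hmax : max a 0 = a := max_eq_left hpos.le
    have hrL : ((2:ℝ) ^ (L:ℝ)) ^ a = r ^ L := by
      rw [← Real.rpow_mul h2.le, mul_comm, Real.rpow_mul h2.le, Real.rpow_natCast]
    rw [hmax, hrL]
    calc ∑ ℓ ∈ Finset.range (L+1), (2:ℝ) ^ ((ℓ:ℝ) * a)
        = ∑ ℓ ∈ Finset.range (L+1), r ^ ℓ := by simp_rw [hterm]
      _ = (r ^ (L+1) - 1) / (r - 1) := geom_sum_eq hr1.ne' (L+1)
      _ ≤ r ^ (L+1) / (r - 1) := by gcongr <;> linarith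
      _ = r / (r - 1) * r ^ L := by rw [pow_succ]; ring

set_option maxHeartbeats 1000000 in
/-- MLMC complexity theorem: under the standard bias, variance and cost
assumptions, the multilevel Monte Carlo estimator achieves MSE `ε²` at total
cost `O(ε^{-2 - max(0,(γ-β)/α)})`. -/
theorem mlmc_complexity
    {Ω : Type*} [MeasureSpace Ω] [IsProbabilityMeasure (ℙ : Measure Ω)]
    (Q : Ω → ℝ) (Qs : ℕ → Ω → ℝ)
    (hQ : MemLp Q 2 ℙ) (hQs : ∀ ℓ, MemLp (Qs ℓ) 2 ℙ)
    (h₀ : ℝ) (hh₀ : 0 < h₀)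
    (h : ℕ → ℝ) (hdef : ∀ ℓ, h ℓ = 2 ^ (-(ℓ : ℝ)) * h₀)
    (Y : ℕ → Ω → ℝ)
    (hY0 : Y 0 = Qs 0) (hYl : ∀ ℓ, 1 ≤ ℓ → Y ℓ = Qs ℓ - Qs (ℓ - 1))
    (cost : ℕ → ℝ) (hcost0 : ∀ ℓ, 0 ≤ cost ℓ)
    (α β γ c₁ c₂ c₃ : ℝ)
    (hα : 0 < α) (hβ : 0 < β) (hγ : 0 < γ)
    (hc₁ : 0 < c₁) (hc₂ : 0 < c₂) (hc₃ : 0 < c₃)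
    (hαmin : α ≥ (1/2) * min β γ) (hβγ : β ≠ γ)
    (hbias : ∀ ℓ, |∫ ω, (Q ω - Qs ℓ ω) ∂ℙ| ≤ c₁ * h ℓ ^ α)
    (hvar : ∀ ℓ, variance (Y ℓ) ℙ ≤ c₂ * h ℓ ^ β)
    (hc : ∀ ℓ, cost ℓ ≤ c₃ * h ℓ ^ (-γ)) :
    ∃ C > 0, ∀ ε ∈ Set.Ioo (0:ℝ) 1,
      ∃ (L : ℕ) (N : ℕ → ℕ), (∀ ℓ ≤ L, 0 < N ℓ) ∧
        (∫ ω, (Q ω - Qs L ω) ∂ℙ) ^ 2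
          + ∑ ℓ ∈ Finset.range (L + 1), variance (Y ℓ) ℙ / (N ℓ : ℝ) ≤ ε ^ 2 ∧
        ∑ ℓ ∈ Finset.range (L + 1), (N ℓ : ℝ) * cost ℓ
          ≤ C * ε ^ (-2 - max 0 ((γ - β) / α)) := by
  have h2 : (0:ℝ) < 2 := two_pos
  obtain ⟨θ, hθdef⟩ : ∃ x : ℝ, x = (γ - β) / 2 := ⟨_, rfl⟩
  have hθne : θ ≠ 0 := by
    intro h'
    exact hβγ (by rw [hθdef] at h'; linarith)
  obtain ⟨G₁, hG₁, hgeom₁⟩ := geom_bound θ hθne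
  obtain ⟨G₂, hG₂, hgeom₂⟩ := geom_bound γ hγ.ne'
  obtain ⟨V, hVdef⟩ : ∃ x : ℝ, x = c₂ * h₀ ^ β := ⟨_, rfl⟩
  obtain ⟨W, hWdef⟩ : ∃ x : ℝ, x = c₃ * h₀ ^ (-γ) := ⟨_, rfl⟩
  have hV : 0 < V := by rw [hVdef]; positivity
  have hW : 0 < W := by rw [hWdef]; positivity
  obtain ⟨c', hc'def⟩ : ∃ x : ℝ, x = (Real.sqrt 2 * c₁ * h₀ ^ α) ^ (1/α) := ⟨_, rfl⟩
  have hc'pos : 0 < c' := by rw [hc'def]; positivity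
  obtain ⟨D, hDdef⟩ : ∃ x : ℝ, x = 2 * max c' 1 := ⟨_, rfl⟩
  have hD1 : 1 ≤ D := by
    have : (1:ℝ) ≤ max c' 1 := le_max_right _ _
    rw [hDdef]; linarith
  have hDpos : 0 < D := lt_of_lt_of_le one_pos hD1
  obtain ⟨m, hmdef⟩ : ∃ x : ℝ, x = max θ 0 := ⟨_, rfl⟩
  have hm0 : 0 ≤ m := hmdef ▸ le_max_right _ _
  obtain ⟨ρ, hρdef⟩ : ∃ x : ℝ, x = max 0 ((γ - β) / α) := ⟨_, rfl⟩
  have hρm : (-1/α) * (2*m) = -ρ := by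
    rcases le_total γ β with h' | h'
    · have h1 : m = 0 := hmdef.trans (max_eq_right (by rw [hθdef]; linarith))
      have h2' : ρ = 0 :=
        hρdef.trans (max_eq_left (div_nonpos_of_nonpos_of_nonneg (by linarith) hα.le))
      rw [h1, h2']; ring
    · have h1 : m = θ := hmdef.trans (max_eq_left (by rw [hθdef]; linarith))
      have h2' : ρ = (γ - β)/α :=
        hρdef.trans (max_eq_right (div_nonneg (by linarith) hα.le))
      rw [h1, h2', hθdef]; field_simp
  have hexp : -2 - ρ ≤ -(γ/α) := by
    have key : γ/α ≤ 2 + ρ := by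
      rcases le_total β γ with hbg | hgb
      · have hmin : min β γ = β := min_eq_left hbg
        rw [hmin] at hαmin
        have hβα : β/α ≤ 2 := by rw [div_le_iff₀ hα]; linarith
        have hρ1 : (γ-β)/α ≤ ρ := hρdef ▸ le_max_right _ _
        have hsplit : γ/α = β/α + (γ-β)/α := by ring
        linarith
      · have hmin : min β γ = γ := min_eq_right hgb
        rw [hmin] at hαmin
        have hγα : γ/α ≤ 2 := by rw [div_le_iff₀ hα]; linarith
        have hρ0 : (0:ℝ) ≤ ρ := hρdef ▸ le_max_left _ _
        linarith
    linarith
  -- rewrite h ℓ ^ x in terms of powers of 2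
  have hhl : ∀ (x : ℝ) (ℓ : ℕ), h ℓ ^ x = (2:ℝ) ^ (-(ℓ:ℝ)*x) * h₀ ^ x := by
    intro x ℓ
    rw [hdef, Real.mul_rpow (by positivity) hh₀.le, ← Real.rpow_mul h2.le]
  have hCpos : 0 < 2*V*W*G₁^2 * D ^ (2*m) + W * G₂ * D ^ γ := by
    have hDpow : ∀ x : ℝ, 0 < D ^ x := fun x => rpow_pos_of_pos hDpos x
    have := hDpow (2*m); have := hDpow γ
    positivity
  refine ⟨2*V*W*G₁^2 * D ^ (2*m) + W * G₂ * D ^ γ, hCpos, ?_⟩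
  rintro ε ⟨hε0, hε1⟩
  obtain ⟨X, hXdef⟩ : ∃ x : ℝ, x = Real.sqrt 2 * c₁ * h₀ ^ α / ε := ⟨_, rfl⟩
  have hXpos : 0 < X := by rw [hXdef]; positivity
  obtain ⟨t, htdef⟩ : ∃ x : ℝ, x = X ^ (1/α) := ⟨_, rfl⟩
  have htpos : 0 < t := htdef ▸ rpow_pos_of_pos hXpos _
  obtain ⟨L, hLdef⟩ : ∃ n : ℕ, n = ⌈Real.logb 2 t⌉₊ := ⟨_, rfl⟩
  have h2Lpos : (0:ℝ) < (2:ℝ) ^ (L:ℝ) := rpow_pos_of_pos h2 _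
  have h2L_ge : t ≤ (2:ℝ) ^ (L:ℝ) := by
    calc t = (2:ℝ) ^ Real.logb 2 t := (Real.rpow_logb h2 (by norm_num) htpos).symm
      _ ≤ (2:ℝ) ^ (L:ℝ) :=
          Real.rpow_le_rpow_of_exponent_le one_le_two (hLdef ▸ Nat.le_ceil _)
  have hεinvpos : (0:ℝ) < ε ^ (-1/α : ℝ) := rpow_pos_of_pos hε0 _
  have hεinv1 : 1 ≤ ε ^ (-1/α : ℝ) := by
    have h' : ε ^ (-1/α : ℝ) ≥ ε ^ (0:ℝ) :=
      Real.rpow_le_rpow_of_exponent_ge hε0 hε1.le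
        (by rw [neg_div]; exact neg_nonpos.mpr (by positivity))
    simpa using h'
  have ht_le : t ≤ c' * ε ^ (-1/α : ℝ) := by
    have hrw : ε ^ (-1/α:ℝ) = (ε ^ (1/α:ℝ))⁻¹ := by
      rw [neg_div, Real.rpow_neg hε0.le]
    rw [htdef, hXdef, hc'def, Real.div_rpow (by positivity) hε0.le, hrw, div_eq_mul_inv]
  have h2L_le : (2:ℝ) ^ (L:ℝ) ≤ D * ε ^ (-1/α:ℝ) := by
    have hstep : (2:ℝ) ^ (L:ℝ) ≤ 2 * max t 1 := by
      rcases le_or_gt 0 (Real.logb 2 t) with hlog | hlog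
      · have hceil : (L:ℝ) < Real.logb 2 t + 1 := hLdef ▸ Nat.ceil_lt_add_one hlog
        calc (2:ℝ)^(L:ℝ) ≤ 2 ^ (Real.logb 2 t + 1) :=
              Real.rpow_le_rpow_of_exponent_le one_le_two hceil.le
          _ = 2 * t := by
              rw [Real.rpow_add h2, Real.rpow_logb h2 (by norm_num) htpos, Real.rpow_one]
              ring
          _ ≤ 2 * max t 1 := by
              have := le_max_left t 1
              linarith
      · have hL0 : L = 0 := by rw [hLdef]; exact Nat.ceil_eq_zero.mpr hlog.le
        rw [hL0]
        have := le_max_right t 1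
        simp only [Nat.cast_zero, Real.rpow_zero]
        linarith
    have hmaxle : max t 1 ≤ max c' 1 * ε ^ (-1/α:ℝ) := by
      apply max_le
      · calc t ≤ c' * ε ^ (-1/α:ℝ) := ht_le
          _ ≤ max c' 1 * ε ^ (-1/α:ℝ) := by
              apply mul_le_mul_of_nonneg_right (le_max_left _ _) hεinvpos.le
      · calc (1:ℝ) ≤ ε ^ (-1/α:ℝ) := hεinv1
          _ = 1 * ε ^ (-1/α:ℝ) := (one_mul _).symm
          _ ≤ max c' 1 * ε ^ (-1/α:ℝ) := by
              apply mul_le_mul_of_nonneg_right (le_max_right _ _) hεinvpos.le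
    calc (2:ℝ)^(L:ℝ) ≤ 2 * max t 1 := hstep
      _ ≤ 2 * (max c' 1 * ε ^ (-1/α:ℝ)) := by linarith
      _ = D * ε ^ (-1/α:ℝ) := by rw [hDdef]; ring
  -- bias bound
  have hbiasL : (∫ ω, (Q ω - Qs L ω) ∂ℙ) ^ 2 ≤ ε^2 / 2 := by
    have hs2 : (0:ℝ) < Real.sqrt 2 := by positivity
    have h1 : c₁ * h L ^ α ≤ ε / Real.sqrt 2 := by
      have hXα : X ≤ ((2:ℝ)^(L:ℝ))^α := by
        calc X = t ^ α := by
              rw [htdef, ← Real.rpow_mul hXpos.le, one_div_mul_cancel hα.ne', Real.rpow_one]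
          _ ≤ ((2:ℝ)^(L:ℝ))^α := Real.rpow_le_rpow htpos.le h2L_ge hα.le
      have hXα' : 0 < ((2:ℝ)^(L:ℝ))^α := rpow_pos_of_pos h2Lpos _
      have h2' : (2:ℝ)^(-(L:ℝ)*α) = (((2:ℝ)^(L:ℝ))^α)⁻¹ := by
        rw [← Real.rpow_mul h2.le, ← Real.rpow_neg h2.le]
        ring_nf
      rw [hhl α L, h2']
      calc c₁ * ((((2:ℝ)^(L:ℝ))^α)⁻¹ * h₀ ^ α) = c₁ * h₀ ^ α / ((2:ℝ)^(L:ℝ))^α := by ring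
        _ ≤ c₁ * h₀ ^ α / X := by gcongr
        _ = ε / Real.sqrt 2 := by
            rw [hXdef]
            field_simp
    calc (∫ ω, (Q ω - Qs L ω) ∂ℙ) ^ 2 = |∫ ω, (Q ω - Qs L ω) ∂ℙ| ^ 2 := (sq_abs _).symm
      _ ≤ (c₁ * h L ^ α)^2 := pow_le_pow_left₀ (abs_nonneg _) (hbias L) 2
      _ ≤ (ε / Real.sqrt 2)^2 :=
          pow_le_pow_left₀ (le_trans (abs_nonneg _) (hbias L)) h1 2
      _ = ε^2/2 := by rw [div_pow, Real.sq_sqrt h2.le]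
  -- sample numbers
  obtain ⟨S, hSdef⟩ : ∃ x : ℝ, x = ∑ k ∈ Finset.range (L+1), (2:ℝ)^((k:ℝ)*θ) := ⟨_, rfl⟩
  have hSpos : 0 < S := by
    rw [hSdef]
    exact Finset.sum_pos (fun k _ => rpow_pos_of_pos h2 _)
      (Finset.nonempty_range_iff.mpr (Nat.succ_ne_zero L))
  obtain ⟨A, hAdef⟩ : ∃ x : ℝ, x = 2*V*S/ε^2 := ⟨_, rfl⟩
  have hApos : 0 < A :=
    hAdef ▸ div_pos (mul_pos (mul_pos two_pos hV) hSpos) (pow_pos hε0 2)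
  have hxpos : ∀ ℓ : ℕ, 0 < A * (2:ℝ)^(-(ℓ:ℝ)*((β+γ)/2)) :=
    fun ℓ => mul_pos hApos (rpow_pos_of_pos h2 _)
  obtain ⟨N, hNdef⟩ : ∃ f : ℕ → ℕ, ∀ ℓ, f ℓ = ⌈A * (2:ℝ)^(-(ℓ:ℝ)*((β+γ)/2))⌉₊ :=
    ⟨_, fun _ => rfl⟩
  have hNpos : ∀ ℓ : ℕ, 0 < N ℓ := fun ℓ => (hNdef ℓ) ▸ Nat.ceil_pos.mpr (hxpos ℓ)
  refine ⟨L, N, fun ℓ _ => hNpos ℓ, ?_, ?_⟩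
  · -- MSE bound
    have hvsum : ∑ ℓ ∈ Finset.range (L+1), variance (Y ℓ) ℙ / (N ℓ : ℝ) ≤ ε^2/2 := by
      have hterm : ∀ ℓ ∈ Finset.range (L+1),
          variance (Y ℓ) ℙ / (N ℓ:ℝ) ≤ ε^2/(2*S) * (2:ℝ)^((ℓ:ℝ)*θ) := by
        intro ℓ _
        have hx := hxpos ℓ
        have hNge : A * (2:ℝ)^(-(ℓ:ℝ)*((β+γ)/2)) ≤ (N ℓ : ℝ) := by
          rw [hNdef ℓ]; exact Nat.le_ceil _
        have hvl : variance (Y ℓ) ℙ ≤ V * (2:ℝ)^(-(ℓ:ℝ)*β) := by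
          calc variance (Y ℓ) ℙ ≤ c₂ * h ℓ ^ β := hvar ℓ
            _ = V * (2:ℝ)^(-(ℓ:ℝ)*β) := by rw [hhl, hVdef]; ring
        have e1 : (2:ℝ)^((ℓ:ℝ)*θ) * (2:ℝ)^(-(ℓ:ℝ)*((β+γ)/2)) = (2:ℝ)^(-(ℓ:ℝ)*β) := by
          rw [← Real.rpow_add h2]
          congr 1
          rw [hθdef]; ring
        have e2 : ε^2/(2*S) * A = V := by
          rw [hAdef, hVdef]
          field_simp
        calc variance (Y ℓ) ℙ / (N ℓ:ℝ)
            ≤ (V * (2:ℝ)^(-(ℓ:ℝ)*β)) / (A * (2:ℝ)^(-(ℓ:ℝ)*((β+γ)/2))) := by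
              apply div_le_div₀ (by positivity) hvl hx hNge
          _ = ε^2/(2*S) * (2:ℝ)^((ℓ:ℝ)*θ) := by
              rw [div_eq_iff (ne_of_gt hx)]
              symm
              calc ε^2/(2*S) * (2:ℝ)^((ℓ:ℝ)*θ) * (A * (2:ℝ)^(-(ℓ:ℝ)*((β+γ)/2)))
                  = (ε^2/(2*S) * A) * ((2:ℝ)^((ℓ:ℝ)*θ) * (2:ℝ)^(-(ℓ:ℝ)*((β+γ)/2))) := by ring
                _ = V * (2:ℝ)^(-(ℓ:ℝ)*β) := by rw [e1, e2]
      calc ∑ ℓ ∈ Finset.range (L+1), variance (Y ℓ) ℙ / (N ℓ : ℝ)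
          ≤ ∑ ℓ ∈ Finset.range (L+1), ε^2/(2*S) * (2:ℝ)^((ℓ:ℝ)*θ) :=
            Finset.sum_le_sum hterm
        _ = ε^2/(2*S) * S := by rw [← Finset.mul_sum, ← hSdef]
        _ = ε^2/2 := by
            rw [div_mul_eq_mul_div, mul_comm (ε^2) S, mul_comm 2 S,
              mul_div_mul_left _ _ hSpos.ne']
    linarith
  · -- cost bound
    rw [← hρdef]
    obtain ⟨T, hTdef⟩ : ∃ x : ℝ, x = ∑ ℓ ∈ Finset.range (L+1), (2:ℝ)^((ℓ:ℝ)*γ) := ⟨_, rfl⟩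
    have hTpos : 0 < T := by
      rw [hTdef]
      exact Finset.sum_pos (fun k _ => rpow_pos_of_pos h2 _)
        (Finset.nonempty_range_iff.mpr (Nat.succ_ne_zero L))
    have hcostl : ∀ ℓ : ℕ, cost ℓ ≤ W * (2:ℝ)^((ℓ:ℝ)*γ) := by
      intro ℓ
      calc cost ℓ ≤ c₃ * h ℓ ^ (-γ) := hc ℓ
        _ = W * (2:ℝ)^((ℓ:ℝ)*γ) := by
            rw [hhl, hWdef]
            have : -(ℓ:ℝ)*(-γ) = (ℓ:ℝ)*γ := by ring
            rw [this]; ring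
    have hsum1 : ∑ ℓ ∈ Finset.range (L+1), (N ℓ:ℝ) * cost ℓ
        ≤ 2*V*W*S^2/ε^2 + W * T := by
      calc ∑ ℓ ∈ Finset.range (L+1), (N ℓ:ℝ) * cost ℓ
          ≤ ∑ ℓ ∈ Finset.range (L+1),
              (A * (2:ℝ)^(-(ℓ:ℝ)*((β+γ)/2)) + 1) * (W * (2:ℝ)^((ℓ:ℝ)*γ)) := by
            apply Finset.sum_le_sum
            intro ℓ _
            rw [hNdef ℓ]
            apply mul_le_mul (Nat.ceil_lt_add_one (hxpos ℓ).le).le (hcostl ℓ)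
              (hcost0 ℓ) (by linarith [hxpos ℓ])
        _ = ∑ ℓ ∈ Finset.range (L+1),
              ((2*V*W*S/ε^2) * (2:ℝ)^((ℓ:ℝ)*θ) + W * (2:ℝ)^((ℓ:ℝ)*γ)) := by
            apply Finset.sum_congr rfl
            intro ℓ _
            have e1 : (2:ℝ)^(-(ℓ:ℝ)*((β+γ)/2)) * (2:ℝ)^((ℓ:ℝ)*γ) = (2:ℝ)^((ℓ:ℝ)*θ) := by
              rw [← Real.rpow_add h2]
              congr 1
              rw [hθdef]; ring
            calc (A * (2:ℝ)^(-(ℓ:ℝ)*((β+γ)/2)) + 1) * (W * (2:ℝ)^((ℓ:ℝ)*γ))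
                = (A*W) * ((2:ℝ)^(-(ℓ:ℝ)*((β+γ)/2)) * (2:ℝ)^((ℓ:ℝ)*γ))
                  + W * (2:ℝ)^((ℓ:ℝ)*γ) := by ring
              _ = (2*V*W*S/ε^2) * (2:ℝ)^((ℓ:ℝ)*θ) + W * (2:ℝ)^((ℓ:ℝ)*γ) := by
                  rw [e1, hAdef]; ring
        _ = (2*V*W*S/ε^2) * S + W * T := by
            rw [Finset.sum_add_distrib, ← Finset.mul_sum, ← Finset.mul_sum, ← hSdef, ← hTdef]
        _ = 2*V*W*S^2/ε^2 + W * T := by ring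
    have hSb : S ≤ G₁ * ((2:ℝ)^(L:ℝ))^m := by
      rw [hSdef, hmdef]; exact hgeom₁ L
    have hTb : T ≤ G₂ * ((2:ℝ)^(L:ℝ))^γ := by
      have := hgeom₂ L
      rw [max_eq_left hγ.le] at this
      rw [hTdef]; exact this
    -- power manipulations
    have hPm : (((2:ℝ)^(L:ℝ))^m)^2 = ((2:ℝ)^(L:ℝ))^(2*m) := by
      rw [← Real.rpow_natCast (((2:ℝ)^(L:ℝ))^m) 2, ← Real.rpow_mul h2Lpos.le]
      norm_num
      ring_nf
    have hbound : ∀ x : ℝ, 0 ≤ x → ((2:ℝ)^(L:ℝ))^x ≤ D^x * ε^((-1/α)*x) := by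
      intro x hx
      calc ((2:ℝ)^(L:ℝ))^x ≤ (D * ε^(-1/α:ℝ))^x :=
            Real.rpow_le_rpow h2Lpos.le h2L_le hx
        _ = D^x * (ε^(-1/α:ℝ))^x := Real.mul_rpow hDpos.le hεinvpos.le
        _ = D^x * ε^((-1/α)*x) := by rw [← Real.rpow_mul hε0.le]
    have hε2 : (ε^2)⁻¹ = ε^((-2:ℝ)) := by
      rw [Real.rpow_neg hε0.le]
      congr 1
      rw [← Real.rpow_natCast ε 2]
      norm_num
    have hterm1 : 2*V*W*S^2/ε^2 ≤ (2*V*W*G₁^2 * D^(2*m)) * ε^(-2-ρ) := by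
      have hS2 : S^2 ≤ G₁^2 * ((2:ℝ)^(L:ℝ))^(2*m) := by
        rw [← hPm]
        calc S^2 ≤ (G₁ * ((2:ℝ)^(L:ℝ))^m)^2 := pow_le_pow_left₀ hSpos.le hSb 2
          _ = G₁^2 * (((2:ℝ)^(L:ℝ))^m)^2 := by ring
      have h2m : ((2:ℝ)^(L:ℝ))^(2*m) ≤ D^(2*m) * ε^(-ρ) := by
        calc ((2:ℝ)^(L:ℝ))^(2*m) ≤ D^(2*m) * ε^((-1/α)*(2*m)) := hbound _ (by positivity)
          _ = D^(2*m) * ε^(-ρ) := by rw [hρm]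
      calc 2*V*W*S^2/ε^2 ≤ 2*V*W*(G₁^2 * (D^(2*m) * ε^(-ρ)))/ε^2 := by
            gcongr
            calc S^2 ≤ G₁^2 * ((2:ℝ)^(L:ℝ))^(2*m) := hS2
              _ ≤ G₁^2 * (D^(2*m) * ε^(-ρ)) := by gcongr
        _ = (2*V*W*G₁^2 * D^(2*m)) * (ε^(-ρ) * (ε^2)⁻¹) := by ring
        _ = (2*V*W*G₁^2 * D^(2*m)) * ε^(-2-ρ) := by
            rw [hε2, ← Real.rpow_add hε0]
            congr 1
            ring_nf
    have hterm2 : W * T ≤ (W * G₂ * D^γ) * ε^(-2-ρ) := by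
      have hTb2 : T ≤ G₂ * (D^γ * ε^((-1/α)*γ)) := by
        calc T ≤ G₂ * ((2:ℝ)^(L:ℝ))^γ := hTb
          _ ≤ G₂ * (D^γ * ε^((-1/α)*γ)) := by gcongr; exact hbound γ hγ.le
      have hεγ : ε^((-1/α)*γ) ≤ ε^(-2-ρ) := by
        apply Real.rpow_le_rpow_of_exponent_ge hε0 hε1.le
        have : (-1/α)*γ = -(γ/α) := by ring
        rw [this]
        exact hexp
      calc W * T ≤ W * (G₂ * (D^γ * ε^((-1/α)*γ))) := by gcongr
        _ = (W * G₂ * D^γ) * ε^((-1/α)*γ) := by ring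
        _ ≤ (W * G₂ * D^γ) * ε^(-2-ρ) := by
            apply mul_le_mul_of_nonneg_left hεγ (by positivity)
    calc ∑ ℓ ∈ Finset.range (L+1), (N ℓ:ℝ) * cost ℓ
        ≤ 2*V*W*S^2/ε^2 + W * T := hsum1
      _ ≤ (2*V*W*G₁^2 * D^(2*m)) * ε^(-2-ρ) + (W * G₂ * D^γ) * ε^(-2-ρ) := by
          linarith
      _ = (2*V*W*G₁^2 * D^(2*m) + W * G₂ * D^γ) * ε^(-2-ρ) := by ring
end

section
/- Let Q ∈ ℝ be a quantity of interest with approximations (Q_ℓ)_{ℓ≥0} at mesh sizes h_ℓ = 2^{-ℓ} h₀ (h₀ > 0), set Y₀ := Q₀, Y_ℓ := Q_ℓ − Q_{ℓ−1}, and let 𝒞_ℓ ≥ 0 be the cost per quasi-Monte Carlo sample on level ℓ. Assume there are constants α, γ, β, c₁, c₂, c₃ > 0 and λ ∈ (1/2, 1] with α ≥ (1/2)·min(βλ, γ)/λ such that (i) |E[Q − Q_ℓ]| ≤ c₁ h_ℓ^α for all ℓ, (ii) for every ℓ and every number of lattice points N ∈ ℕ₊ the shift-averaged randomized QMC estimator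 Ŷ_ℓ(N) of E[Y_ℓ] is unbiased and satisfies Var_Δ[Ŷ_ℓ(N)] ≤ c₂ N^{−1/λ} h_ℓ^β, (iii) 𝒞_ℓ ≤ c₃ h_ℓ^{−γ}, and (iv) βλ ≠ γ. Then there exists C > 0 such that for every ε ∈ (0,1) there exist L ∈ ℕ and positive integers N₀,…,N_L with (E[Q − Q_L])² + Σ_{ℓ=0}^L Var_Δ[Ŷ_ℓ(N_ℓ)] ≤ ε² and total cost Σ_{ℓ=0}^L N_ℓ 𝒞_ℓ ≤ C ε^{−2λ − max(0, (γ−βλ)/α)}. -/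
open Finset

/-- The constant controlling the number of levels `2^L ≤ mlqA · ε^{-1/α}`. -/
noncomputable def mlqA (α c₁ h₀ : ℝ) : ℝ := 2 * max (h₀ * (Real.sqrt 2 * c₁) ^ (1/α)) 1

/-- Geometric sum appearing in the MLQMC analysis. -/
noncomputable def mlqS (β γ lam : ℝ) (L : ℕ) : ℝ :=
  ∑ i ∈ Finset.range (L+1), ((2:ℝ) ^ ((γ - β * lam)/(1 + lam))) ^ i

/-- Number of samples on level `ℓ`. -/
noncomputable def mlqN (β γ lam c₂ h₀ ε : ℝ) (L ℓ : ℕ) : ℕ :=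
  ⌈(2 * c₂ * h₀ ^ β * mlqS β γ lam L / ε ^ 2) ^ lam *
    (2:ℝ) ^ (-((ℓ:ℝ) * ((β + γ) * lam / (1 + lam))))⌉₊

/-- Constant in the bound for `S^{λ+1}`. -/
noncomputable def mlqB (α β γ lam c₁ : ℝ) (h₀ : ℝ) : ℝ :=
  if (γ - β * lam)/(1 + lam) < 0 then
    (1 - (2:ℝ) ^ ((γ - β * lam)/(1 + lam)))⁻¹ ^ (lam + 1)
  else ((2:ℝ) ^ ((γ - β * lam)/(1 + lam)) / ((2:ℝ) ^ ((γ - β * lam)/(1 + lam)) - 1)) ^ (lam + 1)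
    * (mlqA α c₁ h₀) ^ (γ - β * lam)

/-- The final complexity constant. -/
noncomputable def mlqC (α β γ lam c₁ c₂ c₃ h₀ : ℝ) : ℝ :=
  c₃ * h₀ ^ (-γ) * ((2 * c₂ * h₀ ^ β) ^ lam * mlqB α β γ lam c₁ h₀
    + (2:ℝ) ^ γ / ((2:ℝ) ^ γ - 1) * (mlqA α c₁ h₀) ^ γ)

lemma mlq_level (α c₁ h₀ ε : ℝ) (hh₀ : 0 < h₀) (hα : 0 < α) (hc₁ : 0 < c₁)
    (hε0 : 0 < ε) (hε1 : ε < 1) :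
    ∃ L : ℕ, c₁ * ((2:ℝ) ^ (-(L:ℝ)) * h₀) ^ α ≤ ε / Real.sqrt 2 ∧
      (2:ℝ) ^ (L:ℝ) ≤ mlqA α c₁ h₀ * ε ^ (-(1/α)) := by
  set A : ℝ := mlqA α c₁ h₀ with hA
  set T : ℝ := h₀ * (Real.sqrt 2 * c₁ / ε) ^ (1/α) with hT
  have hs2 : (0:ℝ) < Real.sqrt 2 := Real.sqrt_pos.mpr two_pos
  have hT0 : 0 < T := by positivity
  refine ⟨⌈Real.logb 2 T⌉₊, ?_⟩
  set L : ℕ := ⌈Real.logb 2 T⌉₊ with hL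
  have hmono : Monotone fun x : ℝ => (2:ℝ) ^ x := fun x y hxy =>
    Real.rpow_le_rpow_of_exponent_le one_le_two hxy
  have hP : T ≤ (2:ℝ) ^ (L:ℝ) := by
    calc T = (2:ℝ) ^ Real.logb 2 T := (Real.rpow_logb two_pos (by norm_num) hT0).symm
    _ ≤ (2:ℝ) ^ (L:ℝ) := hmono (Nat.le_ceil _)
  have hEneg1 : (1:ℝ) ≤ ε ^ (-(1/α)) :=
    Real.one_le_rpow_of_pos_of_le_one_of_nonpos hε0 hε1.le (neg_nonpos.mpr (by positivity))
  constructor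
  · have h2 : (2:ℝ) ^ (-(L:ℝ)) ≤ T⁻¹ := by
      rw [Real.rpow_neg two_pos.le]
      exact inv_anti₀ hT0 hP
    have h1 : (2:ℝ) ^ (-(L:ℝ)) * h₀ ≤ (ε / (Real.sqrt 2 * c₁)) ^ (1/α) := by
      calc (2:ℝ) ^ (-(L:ℝ)) * h₀ ≤ T⁻¹ * h₀ := by gcongr
        _ = ((Real.sqrt 2 * c₁ / ε) ^ (1/α))⁻¹ := by
            rw [hT, mul_inv]; field_simp
        _ = (ε / (Real.sqrt 2 * c₁)) ^ (1/α) := by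
            rw [← Real.inv_rpow (by positivity), inv_div]
    have h3 := Real.rpow_le_rpow (by positivity) h1 hα.le
    rw [← Real.rpow_mul (by positivity : (0:ℝ) ≤ ε / (Real.sqrt 2 * c₁)),
      one_div, inv_mul_cancel₀ hα.ne', Real.rpow_one] at h3
    calc c₁ * ((2:ℝ) ^ (-(L:ℝ)) * h₀) ^ α ≤ c₁ * (ε / (Real.sqrt 2 * c₁)) :=
          mul_le_mul_of_nonneg_left h3 hc₁.le
      _ = ε / Real.sqrt 2 := by field_simp
  · have h1 : (L:ℝ) ≤ max (Real.logb 2 T) 0 + 1 := by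
      have := Nat.ceil_lt_add_one (le_max_right (Real.logb 2 T) 0)
      have h2 : (L:ℝ) ≤ (⌈max (Real.logb 2 T) 0⌉₊ : ℝ) := by
        have : L ≤ ⌈max (Real.logb 2 T) 0⌉₊ :=
          Nat.ceil_le_ceil (le_max_left (Real.logb 2 T) 0)
        exact_mod_cast this
      linarith
    calc (2:ℝ) ^ (L:ℝ) ≤ (2:ℝ) ^ (max (Real.logb 2 T) 0 + 1) := hmono h1
      _ = (2:ℝ) ^ max (Real.logb 2 T) 0 * 2 := by
          rw [Real.rpow_add two_pos, Real.rpow_one]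
      _ = max T 1 * 2 := by
          rw [Monotone.map_max hmono, Real.rpow_logb two_pos (by norm_num) hT0,
            Real.rpow_zero]
      _ ≤ (max (h₀ * (Real.sqrt 2 * c₁) ^ (1/α)) 1 * ε ^ (-(1/α))) * 2 := by
          have hTsplit : T = h₀ * (Real.sqrt 2 * c₁) ^ (1/α) * ε ^ (-(1/α)) := by
            rw [hT, div_eq_mul_inv, Real.mul_rpow (by positivity) (by positivity),
              Real.inv_rpow hε0.le, ← Real.rpow_neg hε0.le]
            ring
          gcongr
          apply max_le
          · rw [hTsplit]
            gcongr
            exact le_max_left _ _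
          · calc (1:ℝ) ≤ ε ^ (-(1/α)) := hEneg1
              _ ≤ max (h₀ * (Real.sqrt 2 * c₁) ^ (1/α)) 1 * ε ^ (-(1/α)) := by
                  nth_rewrite 1 [← one_mul (ε ^ (-(1/α)))]
                  gcongr
                  exact le_max_right _ _
      _ = A * ε ^ (-(1/α)) := by rw [hA, mlqA]; ring

lemma mlqS_pos (β γ lam : ℝ) (L : ℕ) : 0 < mlqS β γ lam L := by
  apply Finset.sum_pos (fun i _ => pow_pos (Real.rpow_pos_of_pos two_pos _) i)
  exact Finset.nonempty_range_iff.mpr (Nat.succ_ne_zero L)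

lemma mlqN_pos (β γ lam c₂ h₀ ε : ℝ) (L ℓ : ℕ) (hh₀ : 0 < h₀) (hc₂ : 0 < c₂)
    (hε0 : 0 < ε) : 0 < mlqN β γ lam c₂ h₀ ε L ℓ := by
  have hS0 := mlqS_pos β γ lam L
  apply Nat.ceil_pos.mpr
  have h1 : (0:ℝ) < (2 * c₂ * h₀ ^ β * mlqS β γ lam L / ε ^ 2) ^ lam :=
    Real.rpow_pos_of_pos (by positivity) lam
  exact mul_pos h1 (Real.rpow_pos_of_pos two_pos _)

set_option maxHeartbeats 1000000 in
lemma mlq_var (β γ lam c₂ h₀ ε : ℝ) (hh₀ : 0 < h₀)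
    (hc₂ : 0 < c₂) (hlam0 : 0 < lam)
    (hε0 : 0 < ε) (L : ℕ)
    (h : ℕ → ℝ) (hdef : ∀ ℓ, h ℓ = 2 ^ (-(ℓ : ℝ)) * h₀)
    (V : ℕ → ℕ → ℝ)
    (hvar : ∀ ℓ (N : ℕ), 0 < N → V ℓ N ≤ c₂ * (N : ℝ) ^ (-(1/lam)) * h ℓ ^ β)
    (h1lam : (0:ℝ) < 1 + lam) :
    ∑ ℓ ∈ Finset.range (L+1), V ℓ (mlqN β γ lam c₂ h₀ ε L ℓ) ≤ ε ^ 2 / 2 := by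
  set r : ℝ := (γ - β * lam) / (1 + lam) with hr
  set e : ℝ := (2:ℝ) ^ r with he
  have he0 : (0:ℝ) < e := Real.rpow_pos_of_pos two_pos r
  set q : ℝ := (β + γ) * lam / (1 + lam) with hq
  set a : ℕ → ℝ := fun ℓ => (2:ℝ) ^ (-((ℓ:ℝ) * q)) with ha
  have ha0 : ∀ ℓ, 0 < a ℓ := fun ℓ => Real.rpow_pos_of_pos two_pos _
  set S : ℝ := mlqS β γ lam L with hS
  have hSsum : S = ∑ i ∈ Finset.range (L+1), e ^ i := rfl
  have hS0 : 0 < S := mlqS_pos β γ lam L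
  set W : ℝ := 2 * c₂ * h₀ ^ β * S / ε ^ 2 with hW
  have hW0 : 0 < W := by positivity
  set K : ℝ := W ^ lam with hK
  have hK0 : 0 < K := Real.rpow_pos_of_pos hW0 lam
  have hNdef : ∀ ℓ, mlqN β γ lam c₂ h₀ ε L ℓ = ⌈K * a ℓ⌉₊ := fun ℓ => rfl
  have hNpos : ∀ ℓ, 0 < mlqN β γ lam c₂ h₀ ε L ℓ := fun ℓ =>
    mlqN_pos β γ lam c₂ h₀ ε L ℓ hh₀ hc₂ hε0
  have hKinv : K ^ (-(1/lam)) = W⁻¹ := by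
    rw [hK, ← Real.rpow_mul hW0.le, show lam * -(1/lam) = -1 by field_simp,
      Real.rpow_neg_one]
  have key : ∀ ℓ, V ℓ (mlqN β γ lam c₂ h₀ ε L ℓ) ≤ c₂ * W⁻¹ * h₀ ^ β * e ^ ℓ := by
    intro ℓ
    have h1 : V ℓ (mlqN β γ lam c₂ h₀ ε L ℓ)
        ≤ c₂ * ((mlqN β γ lam c₂ h₀ ε L ℓ : ℝ)) ^ (-(1/lam)) * h ℓ ^ β :=
      hvar ℓ _ (hNpos ℓ)
    have hKa : 0 < K * a ℓ := mul_pos hK0 (ha0 ℓ)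
    have h2 : ((mlqN β γ lam c₂ h₀ ε L ℓ : ℝ)) ^ (-(1/lam)) ≤ (K * a ℓ) ^ (-(1/lam)) := by
      rw [hNdef ℓ]
      exact Real.rpow_le_rpow_of_nonpos hKa (Nat.le_ceil _)
        (neg_nonpos.mpr (one_div_nonneg.mpr hlam0.le))
    have h3 : c₂ * (K * a ℓ) ^ (-(1/lam)) * h ℓ ^ β = c₂ * W⁻¹ * h₀ ^ β * e ^ ℓ := by
      rw [hdef ℓ, Real.mul_rpow hK0.le (ha0 ℓ).le,
        Real.mul_rpow (by positivity) hh₀.le, hKinv, ha,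
        ← Real.rpow_mul two_pos.le, ← Real.rpow_mul two_pos.le, he,
        ← Real.rpow_natCast ((2:ℝ) ^ r) ℓ, ← Real.rpow_mul two_pos.le]
      have h4 : (2:ℝ) ^ (-((ℓ:ℝ) * q) * -(1/lam)) * (2:ℝ) ^ (-(ℓ:ℝ) * β)
          = (2:ℝ) ^ (r * (ℓ:ℝ)) := by
        rw [← Real.rpow_add two_pos]
        congr 1
        rw [hq, hr]
        field_simp
        ring
      rw [← h4]
      ring
    calc V ℓ (mlqN β γ lam c₂ h₀ ε L ℓ)
        ≤ c₂ * ((mlqN β γ lam c₂ h₀ ε L ℓ : ℝ)) ^ (-(1/lam)) * h ℓ ^ β := h1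
      _ ≤ c₂ * (K * a ℓ) ^ (-(1/lam)) * h ℓ ^ β := by
          have hhb : (0:ℝ) ≤ h ℓ ^ β := by rw [hdef ℓ]; positivity
          have := hc₂.le
          gcongr
      _ = c₂ * W⁻¹ * h₀ ^ β * e ^ ℓ := h3
  calc ∑ ℓ ∈ Finset.range (L+1), V ℓ (mlqN β γ lam c₂ h₀ ε L ℓ)
      ≤ ∑ ℓ ∈ Finset.range (L+1), c₂ * W⁻¹ * h₀ ^ β * e ^ ℓ :=
        Finset.sum_le_sum fun ℓ _ => key ℓ
    _ = c₂ * W⁻¹ * h₀ ^ β * S := by rw [hSsum, Finset.mul_sum]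
    _ = ε ^ 2 / 2 := by
        have hhb : (0:ℝ) < h₀ ^ β := Real.rpow_pos_of_pos hh₀ β
        rw [hW, inv_div]
        field_simp

lemma mlq_exp (α β γ lam ε : ℝ) (hα : 0 < α) (hlam0 : 0 < lam)
    (hε0 : 0 < ε) (hε1 : ε < 1)
    (hαmin : α ≥ (1/2) * min (β * lam) γ / lam) :
    ε ^ (-(γ/α)) ≤ ε ^ (-(2*lam) - max 0 ((γ - β * lam) / α)) := by
  apply Real.rpow_le_rpow_of_exponent_ge hε0 hε1.le
  have hmge0 : (0:ℝ) ≤ max 0 ((γ - β * lam) / α) := le_max_left _ _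
  rcases le_total (β * lam) γ with hcase | hcase
  · rw [min_eq_left hcase] at hαmin
    have h1 : (γ - β * lam) / α ≤ max 0 ((γ - β * lam) / α) := le_max_right _ _
    have h2 : β * lam / α ≤ 2 * lam := by
      rw [div_le_iff₀ hα]
      have h4 : (1/2) * (β * lam) / lam * (2 * lam) = β * lam := by field_simp
      nlinarith [mul_le_mul_of_nonneg_right hαmin (by linarith : (0:ℝ) ≤ 2 * lam)]
    have h3 : γ / α = (γ - β * lam) / α + β * lam / α := by field_simp; ring
    linarith
  · rw [min_eq_right hcase] at hαmin
    have h2 : γ / α ≤ 2 * lam := by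
      rw [div_le_iff₀ hα]
      have h4 : (1/2) * γ / lam * (2 * lam) = γ := by field_simp
      nlinarith [mul_le_mul_of_nonneg_right hαmin (by linarith : (0:ℝ) ≤ 2 * lam)]
    linarith

set_option maxHeartbeats 1000000 in
lemma mlq_SB (α β γ lam c₁ h₀ ε : ℝ) (hα : 0 < α) (hlam0 : 0 < lam)
    (h1lam : (0:ℝ) < 1 + lam) (hε0 : 0 < ε) (hA0 : 0 < mlqA α c₁ h₀)
    (hrne : (γ - β * lam) / (1 + lam) ≠ 0) (L : ℕ)
    (hPU : (2:ℝ) ^ (L:ℝ) ≤ mlqA α c₁ h₀ * ε ^ (-(1/α))) :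
    (mlqS β γ lam L) ^ (lam + 1)
      ≤ mlqB α β γ lam c₁ h₀ * ε ^ (-(max 0 ((γ - β * lam) / α))) := by
  set A : ℝ := mlqA α c₁ h₀ with hA
  set r : ℝ := (γ - β * lam) / (1 + lam) with hr
  set e : ℝ := (2:ℝ) ^ r with he
  have he0 : (0:ℝ) < e := Real.rpow_pos_of_pos two_pos r
  set S : ℝ := mlqS β γ lam L with hS
  have hSsum : S = ∑ i ∈ Finset.range (L+1), e ^ i := rfl
  have hS0 : 0 < S := mlqS_pos β γ lam L
  set m : ℝ := max 0 ((γ - β * lam) / α) with hm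
  have hgb_eq : γ - β * lam = r * (1 + lam) := by rw [hr]; field_simp
  have hBdef : mlqB α β γ lam c₁ h₀ = if r < 0 then (1 - e)⁻¹ ^ (lam + 1)
      else (e / (e - 1)) ^ (lam + 1) * A ^ (γ - β * lam) := rfl
  rcases hrne.lt_or_gt with hrneg | hrpos
  · have he1 : e < 1 := Real.rpow_lt_one_of_one_lt_of_neg one_lt_two hrneg
    have hm0 : m = 0 := by
      rw [hm, max_eq_left]
      apply div_nonpos_of_nonpos_of_nonneg _ hα.le
      nlinarith
    rw [hm0, neg_zero, Real.rpow_zero, mul_one, hBdef, if_pos hrneg]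
    apply Real.rpow_le_rpow hS0.le ?_ (by linarith)
    have h1e : (0:ℝ) < 1 - e := by linarith
    have h5 : S = (e ^ (L+1) - 1) / (e - 1) := hSsum.trans (geom_sum_eq (ne_of_lt he1) (L+1))
    have h6 : S = (1 - e ^ (L+1)) / (1 - e) := by
      rw [h5, ← neg_div_neg_eq]; ring_nf
    rw [h6, inv_eq_one_div, div_le_div_iff₀ h1e h1e]
    nlinarith [pow_nonneg he0.le (L+1)]
  · have he1 : (1:ℝ) < e :=
      Real.one_lt_rpow_iff_of_pos two_pos |>.2 (Or.inl ⟨one_lt_two, hrpos⟩)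
    have hgb : 0 < γ - β * lam := by nlinarith
    have hmval : m = (γ - β * lam) / α := by
      rw [hm, max_eq_right]; positivity
    have hem : (0:ℝ) < e - 1 := by linarith
    have h5 : S = (e ^ (L+1) - 1) / (e - 1) := hSsum.trans (geom_sum_eq (ne_of_gt he1) (L+1))
    have hSle : S ≤ e / (e - 1) * e ^ L := by
      rw [h5, div_le_iff₀ hem]
      have h6 : e / (e - 1) * e ^ L * (e - 1) = e ^ (L + 1) := by
        field_simp; ring
      rw [h6]
      linarith
    have hcalc : (e:ℝ) ^ L = ((2:ℝ) ^ (L:ℝ)) ^ r := by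
      rw [he, ← Real.rpow_natCast ((2:ℝ) ^ r) L, ← Real.rpow_mul two_pos.le,
        ← Real.rpow_mul two_pos.le]
      congr 1
      ring
    have hEbase : (0:ℝ) < A * ε ^ (-(1/α)) := by positivity
    calc S ^ (lam + 1) ≤ (e / (e - 1) * (A * ε ^ (-(1/α))) ^ r) ^ (lam + 1) := by
          apply Real.rpow_le_rpow hS0.le ?_ (by linarith)
          refine hSle.trans ?_
          have h7 : (e:ℝ) ^ L ≤ (A * ε ^ (-(1/α))) ^ r := by
            rw [hcalc]
            exact Real.rpow_le_rpow (by positivity) hPU hrpos.le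
          have hpos : (0:ℝ) ≤ e / (e - 1) := by positivity
          exact mul_le_mul_of_nonneg_left h7 hpos
      _ = mlqB α β γ lam c₁ h₀ * ε ^ (-m) := by
          rw [Real.mul_rpow (by positivity) (by positivity),
            ← Real.rpow_mul hEbase.le, hBdef, if_neg (not_lt.mpr hrpos.le),
            show r * (lam + 1) = γ - β * lam by rw [hgb_eq]; ring,
            Real.mul_rpow hA0.le (by positivity), ← Real.rpow_mul hε0.le, hmval]
          ring_nf

set_option maxHeartbeats 1000000 in
lemma mlq_cost (α β γ lam c₁ c₂ c₃ h₀ ε : ℝ) (hh₀ : 0 < h₀) (hβ : 0 < β) (hγ : 0 < γ)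
    (hα : 0 < α) (hc₁ : 0 < c₁) (hc₂ : 0 < c₂) (hc₃ : 0 < c₃)
    (hlam0 : 0 < lam) (h1lam : (0:ℝ) < 1 + lam)
    (hαmin : α ≥ (1/2) * min (β * lam) γ / lam) (hblg : β * lam ≠ γ)
    (hε0 : 0 < ε) (hε1 : ε < 1) (L : ℕ)
    (hPU : (2:ℝ) ^ (L:ℝ) ≤ mlqA α c₁ h₀ * ε ^ (-(1/α)))
    (h : ℕ → ℝ) (hdef : ∀ ℓ, h ℓ = 2 ^ (-(ℓ : ℝ)) * h₀)
    (cost : ℕ → ℝ) (hcost0 : ∀ ℓ, 0 ≤ cost ℓ)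
    (hc : ∀ ℓ, cost ℓ ≤ c₃ * h ℓ ^ (-γ)) :
    ∑ ℓ ∈ Finset.range (L+1), (mlqN β γ lam c₂ h₀ ε L ℓ : ℝ) * cost ℓ
      ≤ mlqC α β γ lam c₁ c₂ c₃ h₀ * ε ^ (-(2 * lam) - max 0 ((γ - β * lam) / α)) := by
  have hA0 : 0 < mlqA α c₁ h₀ := by
    have : (0:ℝ) < 2 := two_pos
    have h1 : (1:ℝ) ≤ max (h₀ * (Real.sqrt 2 * c₁) ^ (1/α)) 1 := le_max_right _ _
    rw [mlqA]; nlinarith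
  set A : ℝ := mlqA α c₁ h₀ with hA
  set r : ℝ := (γ - β * lam) / (1 + lam) with hr
  have hrne : r ≠ 0 := by
    rw [hr, div_ne_zero_iff]
    exact ⟨sub_ne_zero.mpr (Ne.symm hblg), by linarith⟩
  set e : ℝ := (2:ℝ) ^ r with he
  have he0 : (0:ℝ) < e := Real.rpow_pos_of_pos two_pos r
  set q : ℝ := (β + γ) * lam / (1 + lam) with hq
  set a : ℕ → ℝ := fun ℓ => (2:ℝ) ^ (-((ℓ:ℝ) * q)) with ha
  have ha0 : ∀ ℓ, 0 < a ℓ := fun ℓ => Real.rpow_pos_of_pos two_pos _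
  set S : ℝ := mlqS β γ lam L with hS
  have hSsum : S = ∑ i ∈ Finset.range (L+1), e ^ i := rfl
  have hS0 : 0 < S := mlqS_pos β γ lam L
  set W : ℝ := 2 * c₂ * h₀ ^ β * S / ε ^ 2 with hW
  have hW0 : 0 < W := by positivity
  set K : ℝ := W ^ lam with hK
  have hK0 : 0 < K := Real.rpow_pos_of_pos hW0 lam
  have hNdef : ∀ ℓ, mlqN β γ lam c₂ h₀ ε L ℓ = ⌈K * a ℓ⌉₊ := fun ℓ => rfl
  set g : ℝ := (2:ℝ) ^ γ with hg
  have hg1 : (1:ℝ) < g := Real.one_lt_rpow_iff_of_pos two_pos |>.2 (Or.inl ⟨one_lt_two, hγ⟩)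
  set m : ℝ := max 0 ((γ - β * lam) / α) with hm
  set B : ℝ := mlqB α β γ lam c₁ h₀ with hB
  have hB0 : 0 < B := by
    rw [hB, mlqB]
    rcases hrne.lt_or_gt with hrneg | hrpos
    · have he1 : e < 1 := Real.rpow_lt_one_of_one_lt_of_neg one_lt_two hrneg
      rw [if_pos hrneg]
      exact Real.rpow_pos_of_pos (by rw [inv_pos]; linarith) _
    · have he1 : (1:ℝ) < e :=
        Real.one_lt_rpow_iff_of_pos two_pos |>.2 (Or.inl ⟨one_lt_two, hrpos⟩)
      rw [if_neg (not_lt.mpr hrpos.le)]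
      have h1 : (0:ℝ) < e - 1 := by linarith
      positivity
  -- pointwise cost bound
  have key : ∀ ℓ, (mlqN β γ lam c₂ h₀ ε L ℓ : ℝ) * cost ℓ
      ≤ c₃ * h₀ ^ (-γ) * (K * e ^ ℓ + g ^ ℓ) := by
    intro ℓ
    have hKa : 0 < K * a ℓ := mul_pos hK0 (ha0 ℓ)
    have h1 : (mlqN β γ lam c₂ h₀ ε L ℓ : ℝ) ≤ K * a ℓ + 1 := by
      rw [hNdef ℓ]
      exact (Nat.ceil_lt_add_one hKa.le).le
    have h2 : (mlqN β γ lam c₂ h₀ ε L ℓ : ℝ) * cost ℓ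
        ≤ (K * a ℓ + 1) * (c₃ * h ℓ ^ (-γ)) :=
      mul_le_mul h1 (hc ℓ) (hcost0 ℓ) (by linarith)
    refine h2.trans (le_of_eq ?_)
    rw [hdef ℓ, Real.mul_rpow (by positivity) hh₀.le, ← Real.rpow_mul two_pos.le]
    have h3 : a ℓ * (2:ℝ) ^ (-(ℓ:ℝ) * -γ) = e ^ ℓ := by
      rw [ha, ← Real.rpow_add two_pos, he, ← Real.rpow_natCast ((2:ℝ) ^ r) ℓ,
        ← Real.rpow_mul two_pos.le]
      congr 1
      rw [hq, hr]
      field_simp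
      ring
    have h4 : (2:ℝ) ^ (-(ℓ:ℝ) * -γ) = g ^ ℓ := by
      rw [hg, ← Real.rpow_natCast ((2:ℝ) ^ γ) ℓ, ← Real.rpow_mul two_pos.le]
      congr 1
      ring
    calc (K * a ℓ + 1) * (c₃ * ((2:ℝ) ^ (-(ℓ:ℝ) * -γ) * h₀ ^ (-γ)))
        = c₃ * h₀ ^ (-γ) * (K * (a ℓ * (2:ℝ) ^ (-(ℓ:ℝ) * -γ)) + (2:ℝ) ^ (-(ℓ:ℝ) * -γ)) := by
          ring
      _ = c₃ * h₀ ^ (-γ) * (K * e ^ ℓ + g ^ ℓ) := by rw [h3, h4]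
  have hsum : ∑ ℓ ∈ Finset.range (L+1), (mlqN β γ lam c₂ h₀ ε L ℓ : ℝ) * cost ℓ
      ≤ c₃ * h₀ ^ (-γ) * (K * S + ∑ ℓ ∈ Finset.range (L+1), g ^ ℓ) := by
    calc ∑ ℓ ∈ Finset.range (L+1), (mlqN β γ lam c₂ h₀ ε L ℓ : ℝ) * cost ℓ
        ≤ ∑ ℓ ∈ Finset.range (L+1), c₃ * h₀ ^ (-γ) * (K * e ^ ℓ + g ^ ℓ) :=
          Finset.sum_le_sum fun ℓ _ => key ℓ
      _ = c₃ * h₀ ^ (-γ) * (K * S + ∑ ℓ ∈ Finset.range (L+1), g ^ ℓ) := by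
          rw [hSsum, Finset.mul_sum, ← Finset.sum_add_distrib, Finset.mul_sum]
  have hG : ∑ ℓ ∈ Finset.range (L+1), g ^ ℓ ≤ g / (g - 1) * A ^ γ * ε ^ (-(γ/α)) := by
    have hgne : g ≠ 1 := ne_of_gt hg1
    have hgm : (0:ℝ) < g - 1 := by linarith
    have h5 : ∑ ℓ ∈ Finset.range (L+1), g ^ ℓ = (g ^ (L+1) - 1) / (g - 1) :=
      geom_sum_eq hgne (L+1)
    have h7 : (g:ℝ) ^ L = ((2:ℝ) ^ (L:ℝ)) ^ γ := by
      rw [hg, ← Real.rpow_natCast ((2:ℝ) ^ γ) L, ← Real.rpow_mul two_pos.le,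
        ← Real.rpow_mul two_pos.le]
      congr 1
      ring
    have h8 : ((2:ℝ) ^ (L:ℝ)) ^ γ ≤ A ^ γ * ε ^ (-(γ/α)) := by
      calc ((2:ℝ) ^ (L:ℝ)) ^ γ ≤ (A * ε ^ (-(1/α))) ^ γ :=
            Real.rpow_le_rpow (by positivity) hPU hγ.le
        _ = A ^ γ * ε ^ (-(γ/α)) := by
            rw [Real.mul_rpow hA0.le (by positivity), ← Real.rpow_mul hε0.le]
            congr 2
            field_simp
    rw [h5, div_le_iff₀ hgm]
    calc g ^ (L+1) - 1 ≤ g * g ^ L := by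
          rw [pow_succ]
          have := pow_pos (by linarith : (0:ℝ) < g) L
          nlinarith
      _ = g * ((2:ℝ) ^ (L:ℝ)) ^ γ := by rw [h7]
      _ ≤ g * (A ^ γ * ε ^ (-(γ/α))) := by
          have := hg1
          gcongr
      _ = g / (g - 1) * A ^ γ * ε ^ (-(γ/α)) * (g - 1) := by field_simp
  have hKS : K * S = (2 * c₂ * h₀ ^ β) ^ lam * S ^ (lam + 1) * ε ^ (-(2*lam)) := by
    have hden : (0:ℝ) < (ε ^ 2 : ℝ) := by positivity
    rw [hK, hW, Real.div_rpow (by positivity) hden.le,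
      Real.mul_rpow (by positivity) hS0.le]
    have h9 : ((ε ^ 2 : ℝ)) ^ lam = ε ^ (2 * lam) := by
      rw [← Real.rpow_natCast ε 2, ← Real.rpow_mul hε0.le]
      norm_num
    have h10 : S ^ (lam + 1) = S ^ lam * S := by
      rw [Real.rpow_add_one hS0.ne' lam]
    rw [h9, h10, Real.rpow_neg hε0.le]
    field_simp
  have hSB : S ^ (lam + 1) ≤ B * ε ^ (-m) :=
    mlq_SB α β γ lam c₁ h₀ ε hα hlam0 h1lam hε0 hA0 hrne L hPU
  have hme : ε ^ (-(γ/α)) ≤ ε ^ (-(2*lam) - m) :=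
    mlq_exp α β γ lam ε hα hlam0 hε0 hε1 hαmin
  have hmerge : ε ^ (-m) * ε ^ (-(2*lam)) = ε ^ (-(2*lam) - m) := by
    rw [← Real.rpow_add hε0]
    ring_nf
  calc ∑ ℓ ∈ Finset.range (L+1), (mlqN β γ lam c₂ h₀ ε L ℓ : ℝ) * cost ℓ
      ≤ c₃ * h₀ ^ (-γ) * (K * S + ∑ ℓ ∈ Finset.range (L+1), g ^ ℓ) := hsum
    _ ≤ c₃ * h₀ ^ (-γ) * ((2 * c₂ * h₀ ^ β) ^ lam * (B * ε ^ (-m)) * ε ^ (-(2*lam))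
          + g / (g - 1) * A ^ γ * ε ^ (-(2*lam) - m)) := by
        have hh1 : K * S ≤ (2 * c₂ * h₀ ^ β) ^ lam * (B * ε ^ (-m)) * ε ^ (-(2*lam)) := by
          rw [hKS]
          have hp1 : (0:ℝ) ≤ (2 * c₂ * h₀ ^ β) ^ lam := by positivity
          have hp2 : (0:ℝ) ≤ ε ^ (-(2*lam)) := by positivity
          gcongr
        have hh2 : ∑ ℓ ∈ Finset.range (L+1), g ^ ℓ
            ≤ g / (g - 1) * A ^ γ * ε ^ (-(2*lam) - m) := by
          refine hG.trans ?_
          have : (0:ℝ) ≤ g / (g - 1) * A ^ γ := by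
            have h1 : (0:ℝ) < g - 1 := by linarith
            positivity
          exact mul_le_mul_of_nonneg_left hme this
        have hp3 : (0:ℝ) ≤ c₃ * h₀ ^ (-γ) := by positivity
        exact mul_le_mul_of_nonneg_left (add_le_add hh1 hh2) hp3
    _ = mlqC α β γ lam c₁ c₂ c₃ h₀ * ε ^ (-(2 * lam) - m) := by
        rw [mlqC, ← hmerge, ← hB, ← hg, ← hA]
        ring

lemma mlqA_pos (α c₁ h₀ : ℝ) : 0 < mlqA α c₁ h₀ := by
  have h1 : (1:ℝ) ≤ max (h₀ * (Real.sqrt 2 * c₁) ^ (1/α)) 1 := le_max_right _ _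
  rw [mlqA]; linarith

lemma mlqB_pos (α β γ lam c₁ h₀ : ℝ) (h1lam : (0:ℝ) < 1 + lam)
    (hblg : β * lam ≠ γ) : 0 < mlqB α β γ lam c₁ h₀ := by
  have hA0 := mlqA_pos α c₁ h₀
  have hrne : (γ - β * lam) / (1 + lam) ≠ 0 := by
    rw [div_ne_zero_iff]
    exact ⟨sub_ne_zero.mpr (Ne.symm hblg), by linarith⟩
  have he0 : (0:ℝ) < (2:ℝ) ^ ((γ - β * lam) / (1 + lam)) :=
    Real.rpow_pos_of_pos two_pos _
  rw [mlqB]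
  rcases hrne.lt_or_gt with hrneg | hrpos
  · have he1 : (2:ℝ) ^ ((γ - β * lam) / (1 + lam)) < 1 :=
      Real.rpow_lt_one_of_one_lt_of_neg one_lt_two hrneg
    rw [if_pos hrneg]
    exact Real.rpow_pos_of_pos (by rw [inv_pos]; linarith) _
  · have he1 : (1:ℝ) < (2:ℝ) ^ ((γ - β * lam) / (1 + lam)) :=
      Real.one_lt_rpow_iff_of_pos two_pos |>.2 (Or.inl ⟨one_lt_two, hrpos⟩)
    rw [if_neg (not_lt.mpr hrpos.le)]
    have h1 : (0:ℝ) < (2:ℝ) ^ ((γ - β * lam) / (1 + lam)) - 1 := by linarith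
    positivity

lemma mlqC_pos (α β γ lam c₁ c₂ c₃ h₀ : ℝ) (hh₀ : 0 < h₀) (hγ : 0 < γ)
    (hc₂ : 0 < c₂) (hc₃ : 0 < c₃) (h1lam : (0:ℝ) < 1 + lam)
    (hblg : β * lam ≠ γ) : 0 < mlqC α β γ lam c₁ c₂ c₃ h₀ := by
  have hA0 := mlqA_pos α c₁ h₀
  have hB0 := mlqB_pos α β γ lam c₁ h₀ h1lam hblg
  have hg1 : (1:ℝ) < (2:ℝ) ^ γ :=
    Real.one_lt_rpow_iff_of_pos two_pos |>.2 (Or.inl ⟨one_lt_two, hγ⟩)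
  have hgm : (0:ℝ) < (2:ℝ) ^ γ - 1 := by linarith
  rw [mlqC]
  have h1 : (0:ℝ) < h₀ ^ (-γ) := Real.rpow_pos_of_pos hh₀ _
  have h2 : (0:ℝ) < (2 * c₂ * h₀ ^ β) ^ lam :=
    Real.rpow_pos_of_pos (by positivity) _
  have h3 : (0:ℝ) < (2:ℝ) ^ γ := by linarith
  positivity

/-- MLQMC complexity theorem: under the bias, QMC-variance and cost
assumptions, the multilevel quasi-Monte Carlo estimator achieves MSE `ε²` at
total cost `O(ε^{-2λ - max(0,(γ-βλ)/α)})`. -/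
theorem mlqmc_complexity
    (Q : ℝ) (Qs : ℕ → ℝ)
    (h₀ : ℝ) (hh₀ : 0 < h₀)
    (h : ℕ → ℝ) (hdef : ∀ ℓ, h ℓ = 2 ^ (-(ℓ : ℝ)) * h₀)
    (Y : ℕ → ℝ) (hY0 : Y 0 = Qs 0) (hYl : ∀ ℓ, 1 ≤ ℓ → Y ℓ = Qs ℓ - Qs (ℓ - 1))
    (cost : ℕ → ℝ) (hcost0 : ∀ ℓ, 0 ≤ cost ℓ)
    -- `V ℓ N` is the variance (over the random shifts) of the level-`ℓ`
    -- shift-averaged randomized QMC estimator of `E[Y ℓ]` with `N` lattice points;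
    -- unbiasedness means its mean is exactly `Y ℓ` here (deterministic setting).
    (V : ℕ → ℕ → ℝ) (hV0 : ∀ ℓ N, 0 ≤ V ℓ N)
    (α β γ lam c₁ c₂ c₃ : ℝ)
    (hα : 0 < α) (hβ : 0 < β) (hγ : 0 < γ)
    (hc₁ : 0 < c₁) (hc₂ : 0 < c₂) (hc₃ : 0 < c₃)
    (hlam : lam ∈ Set.Ioc (1/2 : ℝ) 1)
    (hαmin : α ≥ (1/2) * min (β * lam) γ / lam) (hblg : β * lam ≠ γ)
    (hbias : ∀ ℓ, |Q - Qs ℓ| ≤ c₁ * h ℓ ^ α)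
    (hvar : ∀ ℓ (N : ℕ), 0 < N → V ℓ N ≤ c₂ * (N : ℝ) ^ (-(1/lam)) * h ℓ ^ β)
    (hc : ∀ ℓ, cost ℓ ≤ c₃ * h ℓ ^ (-γ)) :
    ∃ C > 0, ∀ ε ∈ Set.Ioo (0:ℝ) 1,
      ∃ (L : ℕ) (N : ℕ → ℕ), (∀ ℓ ≤ L, 0 < N ℓ) ∧
        (Q - Qs L) ^ 2 + ∑ ℓ ∈ Finset.range (L + 1), V ℓ (N ℓ) ≤ ε ^ 2 ∧
        ∑ ℓ ∈ Finset.range (L + 1), (N ℓ : ℝ) * cost ℓ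
          ≤ C * ε ^ (-(2 * lam) - max 0 ((γ - β * lam) / α)) := by
  obtain ⟨hlam1, hlam2⟩ := hlam
  have hlam0 : (0:ℝ) < lam := by linarith
  have h1lam : (0:ℝ) < 1 + lam := by linarith
  refine ⟨mlqC α β γ lam c₁ c₂ c₃ h₀,
    mlqC_pos α β γ lam c₁ c₂ c₃ h₀ hh₀ hγ hc₂ hc₃ h1lam hblg, ?_⟩
  rintro ε ⟨hε0, hε1⟩
  obtain ⟨L, hbiasL, hPU⟩ := mlq_level α c₁ h₀ ε hh₀ hα hc₁ hε0 hε1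
  refine ⟨L, mlqN β γ lam c₂ h₀ ε L, fun ℓ _ => mlqN_pos β γ lam c₂ h₀ ε L ℓ hh₀ hc₂ hε0,
    ?_, mlq_cost α β γ lam c₁ c₂ c₃ h₀ ε hh₀ hβ hγ hα hc₁ hc₂ hc₃ hlam0 h1lam
      hαmin hblg hε0 hε1 L hPU h hdef cost hcost0 hc⟩
  have hs2 : (0:ℝ) < Real.sqrt 2 := Real.sqrt_pos.mpr two_pos
  have habs : |Q - Qs L| ≤ ε / Real.sqrt 2 := by
    refine (hbias L).trans ?_
    rw [hdef L]
    exact hbiasL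
  have hsq : (Q - Qs L) ^ 2 ≤ ε ^ 2 / 2 := by
    calc (Q - Qs L) ^ 2 = |Q - Qs L| ^ 2 := (sq_abs _).symm
      _ ≤ (ε / Real.sqrt 2) ^ 2 := by
          have := abs_nonneg (Q - Qs L)
          gcongr
      _ = ε ^ 2 / 2 := by rw [div_pow, Real.sq_sqrt two_pos.le]
  have hvarsum := mlq_var β γ lam c₂ h₀ ε hh₀ hc₂ hlam0 hε0 L h hdef V hvar h1lam
  linarith
end

section
/- Let Q ∈ ℝ be a quantity of interest and for h ∈ (0, h₀] let Q_h ∈ L²(Ω) be an approximation. Assume there are constants α, γ, c₁, c₃ > 0 and v > 0 such that |E[Q − Q_h]| ≤ c₁ h^α, Var[Q_h] ≤ v, and the cost of one sample of Q_h is at most c₃ h^{−γ}, for all h ∈ (0, h₀]. Then there exists a constant C > 0 such that for every ε ∈ (0,1) there exist h ∈ (0, h₀] and N ∈ ℕ₊ with (E[Q − Q_h])² + Var[Q_h]/N ≤ ε² (i.e. the standard Monte Carlo estimator averaging N i.i.d. samples of Q_h has mean square error at most ε²) and total cost N · c₃ h^{−γ} ≤ C ε^{−2 − γ/α}. -/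
open MeasureTheory ProbabilityTheory

/-- Standard Monte Carlo complexity: under the bias, variance and cost
assumptions, the standard MC estimator achieves MSE `ε²` at total cost
`O(ε^{-2-γ/α})`. -/
theorem mc_complexity
    {Ω : Type*} [MeasureSpace Ω] [IsProbabilityMeasure (ℙ : Measure Ω)]
    (Q : ℝ) (h₀ : ℝ) (hh₀ : 0 < h₀)
    (Qh : ℝ → Ω → ℝ)
    (hmem : ∀ h ∈ Set.Ioc (0:ℝ) h₀, MemLp (Qh h) 2 ℙ)
    (α γ c₁ c₃ v : ℝ)
    (hα : 0 < α) (hγ : 0 < γ) (hc₁ : 0 < c₁) (hc₃ : 0 < c₃) (hv : 0 < v)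
    (hbias : ∀ h ∈ Set.Ioc (0:ℝ) h₀, |Q - ∫ ω, Qh h ω ∂ℙ| ≤ c₁ * h ^ α)
    (hvar : ∀ h ∈ Set.Ioc (0:ℝ) h₀, variance (Qh h) ℙ ≤ v) :
    ∃ C > 0, ∀ ε ∈ Set.Ioo (0:ℝ) 1,
      ∃ h ∈ Set.Ioc (0:ℝ) h₀, ∃ N : ℕ, 0 < N ∧
        (Q - ∫ ω, Qh h ω ∂ℙ) ^ 2 + variance (Qh h) ℙ / (N : ℝ) ≤ ε ^ 2 ∧
        (N : ℝ) * (c₃ * h ^ (-γ)) ≤ C * ε ^ (-2 - γ / α) := by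
  have hs2 : (0:ℝ) < Real.sqrt 2 := by positivity
  set K : ℝ := h₀ ^ (-γ) + (Real.sqrt 2 * c₁) ^ (γ / α) with hK
  have hKpos : 0 < K := by positivity
  refine ⟨(2 * v + 1) * c₃ * K, by positivity, ?_⟩
  rintro ε ⟨hε0, hε1⟩
  set b : ℝ := (ε / (Real.sqrt 2 * c₁)) ^ (1 / α) with hb
  have hbase : 0 < ε / (Real.sqrt 2 * c₁) := by positivity
  have hbpos : 0 < b := Real.rpow_pos_of_pos hbase _
  set h : ℝ := min h₀ b with hdef
  have hpos : 0 < h := lt_min hh₀ hbpos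
  have hIoc : h ∈ Set.Ioc (0:ℝ) h₀ := ⟨hpos, min_le_left _ _⟩
  have hbα : b ^ α = ε / (Real.sqrt 2 * c₁) := by
    rw [hb, one_div, Real.rpow_inv_rpow hbase.le hα.ne']
  have hhα : h ^ α ≤ ε / (Real.sqrt 2 * c₁) := by
    rw [← hbα]
    exact Real.rpow_le_rpow hpos.le (min_le_right _ _) hα.le
  have hbias2 : (Q - ∫ ω, Qh h ω ∂ℙ) ^ 2 ≤ ε ^ 2 / 2 := by
    have h1 : |Q - ∫ ω, Qh h ω ∂ℙ| ≤ ε / Real.sqrt 2 := by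
      calc |Q - ∫ ω, Qh h ω ∂ℙ| ≤ c₁ * h ^ α := hbias h hIoc
        _ ≤ c₁ * (ε / (Real.sqrt 2 * c₁)) := by
            exact mul_le_mul_of_nonneg_left hhα hc₁.le
        _ = ε / Real.sqrt 2 := by field_simp
    have h2 : (Q - ∫ ω, Qh h ω ∂ℙ) ^ 2 ≤ (ε / Real.sqrt 2) ^ 2 := by
      rw [← sq_abs]
      exact pow_le_pow_left₀ (abs_nonneg _) h1 2
    have h3 : (ε / Real.sqrt 2) ^ 2 = ε ^ 2 / 2 := by
      rw [div_pow, Real.sq_sqrt (by norm_num : (0:ℝ) ≤ 2)]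
    linarith
  set N : ℕ := ⌈2 * v / ε ^ 2⌉₊ with hNdef
  have hq : 0 < 2 * v / ε ^ 2 := by positivity
  have hNpos : 0 < N := Nat.ceil_pos.mpr hq
  have hNge : 2 * v / ε ^ 2 ≤ (N : ℝ) := Nat.le_ceil _
  have hNpos' : (0:ℝ) < N := by exact_mod_cast hNpos
  refine ⟨h, hIoc, N, hNpos, ?_, ?_⟩
  · have hvle : variance (Qh h) ℙ ≤ v := hvar h hIoc
    have hvarsum : variance (Qh h) ℙ / (N : ℝ) ≤ ε ^ 2 / 2 := by
      have h1 : variance (Qh h) ℙ / (N : ℝ) ≤ v / (N : ℝ) := by gcongr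
      have h2 : v / (N : ℝ) ≤ v / (2 * v / ε ^ 2) := by gcongr
      have h3 : v / (2 * v / ε ^ 2) = ε ^ 2 / 2 := by field_simp
      linarith
    linarith
  · -- cost bound
    have hNle : (N : ℝ) ≤ 2 * v / ε ^ 2 + 1 := (Nat.ceil_lt_add_one hq.le).le
    have hε2 : ε ^ 2 ≤ 1 := by nlinarith
    have hNle' : (N : ℝ) ≤ (2 * v + 1) / ε ^ 2 := by
      rw [add_div]
      have : (1:ℝ) ≤ 1 / ε ^ 2 := by
        rw [le_div_iff₀ (by positivity)]; linarith
      linarith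
    have hεneg : (1:ℝ) ≤ ε ^ (-(γ / α)) :=
      Real.one_le_rpow_of_pos_of_le_one_of_nonpos hε0 hε1.le (neg_nonpos.mpr (by positivity))
    have hεnegpos : 0 < ε ^ (-(γ / α)) := Real.rpow_pos_of_pos hε0 _
    have hhγ : h ^ (-γ) ≤ K * ε ^ (-(γ / α)) := by
      rcases min_cases h₀ b with ⟨heq, _⟩ | ⟨heq, _⟩
      · rw [hdef, heq]
        calc h₀ ^ (-γ) = h₀ ^ (-γ) * 1 := by ring
          _ ≤ h₀ ^ (-γ) * ε ^ (-(γ / α)) := by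
              exact mul_le_mul_of_nonneg_left hεneg (Real.rpow_pos_of_pos hh₀ _).le
          _ ≤ K * ε ^ (-(γ / α)) := by
              apply mul_le_mul_of_nonneg_right _ hεnegpos.le
              rw [hK]
              nlinarith [Real.rpow_pos_of_pos (mul_pos hs2 hc₁) (γ / α)]
      · rw [hdef, heq, hb, ← Real.rpow_mul hbase.le,
          show (1 / α * (-γ)) = -(γ / α) by field_simp,
          Real.div_rpow hε0.le (by positivity : (0:ℝ) ≤ Real.sqrt 2 * c₁),
          Real.rpow_neg (by positivity : (0:ℝ) ≤ Real.sqrt 2 * c₁), div_eq_mul_inv, inv_inv]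
        have hK2 : (0:ℝ) < h₀ ^ (-γ) := Real.rpow_pos_of_pos hh₀ _
        rw [hK]
        nlinarith [Real.rpow_pos_of_pos (mul_pos hs2 hc₁) (γ / α)]
    calc (N : ℝ) * (c₃ * h ^ (-γ))
        ≤ ((2 * v + 1) / ε ^ 2) * (c₃ * (K * ε ^ (-(γ / α)))) := by
          apply mul_le_mul hNle' (mul_le_mul_of_nonneg_left hhγ hc₃.le)
            (by positivity) (by positivity)
      _ = (2 * v + 1) * c₃ * K * (ε ^ (-(γ / α)) / ε ^ 2) := by ring
      _ = (2 * v + 1) * c₃ * K * ε ^ (-2 - γ / α) := by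
          have e2 : ε ^ ((-2 : ℝ) - γ / α) = ε ^ (-(γ / α)) * (ε ^ 2)⁻¹ := by
            rw [show (-2 - γ / α : ℝ) = -(γ / α) + (-2) by ring, Real.rpow_add hε0]
            congr 1
            rw [show ((-2 : ℝ)) = ((-2 : ℤ) : ℝ) by norm_num, Real.rpow_intCast,
              zpow_neg]
            norm_cast
          rw [e2]; ring
end

section
/- Let Q ∈ ℝ be a quantity of interest and for h ∈ (0, h₀] let Q_h be an approximation. Assume there are constants α, γ, λ, c₁, c₂, c₃ > 0 with λ ∈ (1/2, 1] such that: (i) |E[Q − Q_h]| ≤ c₁ h^α for all h ∈ (0, h₀]; (ii) for every h and every number of lattice points N ∈ ℕ₊, the randomly shifted lattice-rule estimator Q̂(h, N) of E[Q_h] is unbiased and its variance over the uniform random shift satisfies Var_Δ[Q̂(h,N)] ≤ c₂ N^{−1/λ}; (iii) the cost of computing Q̂(h,N) is at most c₃ N h^{−γ}. Then there exists a constant C > 0 such that for every ε ∈ (0,1) there exist h ∈ (0, h₀] and N ∈ ℕ₊ with (E[Q − Q_h])² + Var_Δ[Q̂(h,N)] ≤ ε² and cost at most C ε^{−2λ −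 γ/α}. -/
/-- QMC complexity: under the bias assumption, the QMC-variance decay
`Var ≤ c₂ N^{-1/λ}` and the cost assumption, the randomly shifted lattice-rule
estimator achieves MSE `ε²` at cost `O(ε^{-2λ-γ/α})`. -/
theorem qmc_complexity
    (Q : ℝ) (h₀ : ℝ) (hh₀ : 0 < h₀)
    (Qh : ℝ → ℝ)
    -- `V h N` is the variance (over the uniform random shift) of the unbiased
    -- randomly shifted lattice-rule estimator `Q̂(h,N)` of `E[Q_h]`.
    (V : ℝ → ℕ → ℝ) (hV0 : ∀ h N, 0 ≤ V h N)
    (α γ lam c₁ c₂ c₃ : ℝ)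
    (hα : 0 < α) (hγ : 0 < γ) (hc₁ : 0 < c₁) (hc₂ : 0 < c₂) (hc₃ : 0 < c₃)
    (hlam : lam ∈ Set.Ioc (1/2 : ℝ) 1)
    (hbias : ∀ h ∈ Set.Ioc (0:ℝ) h₀, |Q - Qh h| ≤ c₁ * h ^ α)
    (hvar : ∀ h ∈ Set.Ioc (0:ℝ) h₀, ∀ N : ℕ, 0 < N →
      V h N ≤ c₂ * (N : ℝ) ^ (-(1/lam))) :
    ∃ C > 0, ∀ ε ∈ Set.Ioo (0:ℝ) 1,
      ∃ h ∈ Set.Ioc (0:ℝ) h₀, ∃ N : ℕ, 0 < N ∧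
        (Q - Qh h) ^ 2 + V h N ≤ ε ^ 2 ∧
        c₃ * (N : ℝ) * h ^ (-γ) ≤ C * ε ^ (-(2 * lam) - γ / α) := by
  have hlam0 : 0 < lam := lt_trans (by norm_num) hlam.1
  set D : ℝ := c₁ * Real.sqrt 2 with hD
  have hDpos : 0 < D := mul_pos hc₁ (Real.sqrt_pos.mpr (by norm_num))
  set A : ℝ := (2 * c₂) ^ lam with hA
  have hApos : 0 < A := Real.rpow_pos_of_pos (by linarith) lam
  set K : ℝ := h₀ ^ (-γ) + D ^ (γ / α) with hK
  have hKpos : 0 < K :=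
    add_pos (Real.rpow_pos_of_pos hh₀ _) (Real.rpow_pos_of_pos hDpos _)
  refine ⟨c₃ * (A + 1) * K, by positivity, ?_⟩
  intro ε hε
  obtain ⟨hε0, hε1⟩ := hε
  -- choice of h
  set b : ℝ := (ε / D) ^ (1 / α) with hb
  have hbpos : 0 < b := Real.rpow_pos_of_pos (div_pos hε0 hDpos) _
  set h : ℝ := min h₀ b with hh
  have hhpos : 0 < h := lt_min hh₀ hbpos
  have hhIoc : h ∈ Set.Ioc (0:ℝ) h₀ := ⟨hhpos, min_le_left _ _⟩
  -- choice of N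
  set B : ℝ := 2 * c₂ / ε ^ 2 with hB
  have hBpos : 0 < B := div_pos (by linarith) (by positivity)
  set N : ℕ := ⌈B ^ lam⌉₊ with hN
  have hBlpos : 0 < B ^ lam := Real.rpow_pos_of_pos hBpos _
  have hNpos : 0 < N := Nat.ceil_pos.mpr hBlpos
  have hNge : B ^ lam ≤ (N : ℝ) := Nat.le_ceil _
  have hεD : 0 ≤ ε / D := le_of_lt (div_pos hε0 hDpos)
  refine ⟨h, hhIoc, N, hNpos, ?_, ?_⟩
  · -- MSE bound
    have hbα : b ^ α = ε / D := by
      rw [hb, ← Real.rpow_mul hεD, one_div, inv_mul_cancel₀ (ne_of_gt hα),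
        Real.rpow_one]
    have hbias2 : (Q - Qh h) ^ 2 ≤ ε ^ 2 / 2 := by
      have h1 : |Q - Qh h| ≤ c₁ * h ^ α := hbias h hhIoc
      have h2 : h ^ α ≤ b ^ α :=
        Real.rpow_le_rpow (le_of_lt hhpos) (min_le_right _ _) (le_of_lt hα)
      have h3 : |Q - Qh h| ≤ ε / Real.sqrt 2 := by
        have : c₁ * (ε / D) = ε / Real.sqrt 2 := by
          rw [hD]; field_simp
        nlinarith [h2, hbα, hc₁.le]
      have h4 : (Q - Qh h) ^ 2 ≤ (ε / Real.sqrt 2) ^ 2 := by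
        rw [← sq_abs]
        exact pow_le_pow_left₀ (abs_nonneg _) h3 2
      have h5 : (ε / Real.sqrt 2) ^ 2 = ε ^ 2 / 2 := by
        rw [div_pow, Real.sq_sqrt (by norm_num : (2:ℝ) ≥ 0)]
      linarith
    have hvar2 : V h N ≤ ε ^ 2 / 2 := by
      have h1 := hvar h hhIoc N hNpos
      have h2 : (N : ℝ) ^ (-(1/lam)) ≤ B⁻¹ := by
        have hNpos' : (0:ℝ) < N := by exact_mod_cast hNpos
        have h3 : (B ^ lam) ^ (1/lam) ≤ (N:ℝ) ^ (1/lam) :=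
          Real.rpow_le_rpow (le_of_lt hBlpos) hNge (by positivity)
        have h4 : (B ^ lam) ^ (1/lam) = B := by
          rw [← Real.rpow_mul (le_of_lt hBpos),
            mul_one_div_cancel (ne_of_gt hlam0), Real.rpow_one]
        rw [Real.rpow_neg (le_of_lt hNpos')]
        rw [h4] at h3
        exact inv_anti₀ hBpos h3
      have h5 : c₂ * B⁻¹ = ε ^ 2 / 2 := by
        rw [hB]; field_simp
      calc V h N ≤ c₂ * (N : ℝ) ^ (-(1/lam)) := h1
        _ ≤ c₂ * B⁻¹ := by
            exact mul_le_mul_of_nonneg_left h2 hc₂.le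
        _ = ε ^ 2 / 2 := h5
    linarith
  · -- cost bound
    have hεneg1 : (1:ℝ) ≤ ε ^ (-(2*lam)) :=
      Real.one_le_rpow_of_pos_of_le_one_of_nonpos hε0 hε1.le (by linarith)
    have hεneg2 : (1:ℝ) ≤ ε ^ (-(γ/α)) :=
      Real.one_le_rpow_of_pos_of_le_one_of_nonpos hε0 hε1.le
        (neg_nonpos.mpr (div_pos hγ hα).le)
    have hBl : B ^ lam = A * ε ^ (-(2*lam)) := by
      rw [hB, Real.div_rpow (by linarith) (by positivity), hA]
      congr 1
      rw [← Real.rpow_natCast ε 2, ← Real.rpow_mul hε0.le,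
        div_eq_mul_inv, ← Real.rpow_neg hε0.le]
      norm_num
    have hNle : (N : ℝ) ≤ (A + 1) * ε ^ (-(2*lam)) := by
      have h1 : (N : ℝ) ≤ B ^ lam + 1 := le_of_lt (Nat.ceil_lt_add_one hBlpos.le)
      have h2 : (1:ℝ) ≤ 1 * ε ^ (-(2*lam)) := by rwa [one_mul]
      rw [hBl] at h1
      nlinarith
    have hhγ : h ^ (-γ) ≤ K * ε ^ (-(γ/α)) := by
      have hb1 : b ^ (-γ) = D ^ (γ/α) * ε ^ (-(γ/α)) := by
        rw [hb, ← Real.rpow_mul hεD, show 1/α * (-γ) = -(γ/α) by ring,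
          Real.div_rpow hε0.le hDpos.le, div_eq_mul_inv,
          ← Real.rpow_neg hDpos.le, neg_neg, mul_comm]
      have hcase : h ^ (-γ) ≤ h₀ ^ (-γ) + b ^ (-γ) := by
        rcases min_cases h₀ b with ⟨he, _⟩ | ⟨he, _⟩
        · rw [hh, he]
          have : 0 ≤ b ^ (-γ) := (Real.rpow_pos_of_pos hbpos _).le
          linarith
        · rw [hh, he]
          have : 0 ≤ h₀ ^ (-γ) := (Real.rpow_pos_of_pos hh₀ _).le
          linarith
      have h0le : h₀ ^ (-γ) ≤ h₀ ^ (-γ) * ε ^ (-(γ/α)) := by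
        nlinarith [Real.rpow_pos_of_pos hh₀ (-γ)]
      calc h ^ (-γ) ≤ h₀ ^ (-γ) + b ^ (-γ) := hcase
        _ = h₀ ^ (-γ) + D ^ (γ/α) * ε ^ (-(γ/α)) := by rw [hb1]
        _ ≤ h₀ ^ (-γ) * ε ^ (-(γ/α)) + D ^ (γ/α) * ε ^ (-(γ/α)) := by
            linarith
        _ = K * ε ^ (-(γ/α)) := by rw [hK]; ring
    have hsplit : ε ^ (-(2 * lam) - γ / α) = ε ^ (-(2*lam)) * ε ^ (-(γ/α)) := by
      rw [← Real.rpow_add hε0]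
      ring_nf
    rw [hsplit]
    have hN0 : (0:ℝ) ≤ (N:ℝ) := Nat.cast_nonneg _
    have hh0 : (0:ℝ) ≤ h ^ (-γ) := (Real.rpow_pos_of_pos hhpos _).le
    calc c₃ * (N:ℝ) * h ^ (-γ)
        ≤ c₃ * ((A + 1) * ε ^ (-(2*lam))) * (K * ε ^ (-(γ/α))) := by
          apply mul_le_mul
          · exact mul_le_mul_of_nonneg_left hNle hc₃.le
          · exact hhγ
          · exact hh0
          · positivity
      _ = c₃ * (A + 1) * K * (ε ^ (-(2*lam)) * ε ^ (-(γ/α))) := by ring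
end

section
/- Let μ > 0, let 0 = x₀ < x₁ < … < x_M = 1 be a mesh with h_j := x_j − x_{j−1}, and for each j let σ_{j−1/2} and g_{j−1/2} be real numbers with σ_{j−1/2} ≥ σ_min > 0. Then the Crank–Nicolson (diamond-difference) recurrence μ (U_j − U_{j−1})/h_j + σ_{j−1/2} (U_j + U_{j−1})/2 = g_{j−1/2}, j = 1,…,M, with U₀ = 0, has a unique solution (U₀,…,U_M). Moreover, if the mesh condition h_j ≤ 2μ/σ_{j−1/2} holds for all j, then max_{0 ≤ j ≤ M} |U_j| ≤ max_{1 ≤ j ≤ M} |g_{j−1/2}| / σ_min. -/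
open Finset

/-- The Crank–Nicolson (diamond-difference) recurrence for the pure transport
problem with `μ > 0` has a unique solution with `U₀ = 0`; moreover, under the
mesh condition `h_j ≤ 2μ/σ_{j−1/2}`, the discrete maximum principle
`max_j |U_j| ≤ max_j |g_{j−1/2}| / σ_min` holds. -/
theorem crank_nicolson_recurrence
    (μ : ℝ) (hμ : 0 < μ) (M : ℕ) (hM : 0 < M)
    (x : ℕ → ℝ) (hx0 : x 0 = 0) (hxM : x M = 1)
    (hmono : ∀ j < M, x j < x (j + 1))
    (h : ℕ → ℝ) (hh : ∀ j, 1 ≤ j → h j = x j - x (j - 1))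
    (σh gh : ℕ → ℝ) (σmin : ℝ) (hσmin : 0 < σmin)
    (hσ : ∀ j, 1 ≤ j → j ≤ M → σmin ≤ σh j) :
    (∃! U : Fin (M + 1) → ℝ, U 0 = 0 ∧
      ∀ j : ℕ, (hj : 1 ≤ j) → (hjM : j ≤ M) →
        μ * (U ⟨j, by omega⟩ - U ⟨j - 1, by omega⟩) / h j
          + σh j * (U ⟨j, by omega⟩ + U ⟨j - 1, by omega⟩) / 2 = gh j) ∧
    (∀ U : Fin (M + 1) → ℝ, U 0 = 0 →
      (∀ j : ℕ, (hj : 1 ≤ j) → (hjM : j ≤ M) →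
        μ * (U ⟨j, by omega⟩ - U ⟨j - 1, by omega⟩) / h j
          + σh j * (U ⟨j, by omega⟩ + U ⟨j - 1, by omega⟩) / 2 = gh j) →
      (∀ j, 1 ≤ j → j ≤ M → h j ≤ 2 * μ / σh j) →
      ∀ j : Fin (M + 1), |U j|
        ≤ ((Finset.Icc 1 M).sup' (Finset.nonempty_Icc.mpr hM) fun j => |gh j|)
            / σmin) := by
  have hhpos : ∀ j, 1 ≤ j → j ≤ M → 0 < h j := by
    intro j h1 h2
    rw [hh j h1]
    have h3 := hmono (j - 1) (by omega)
    have e : j - 1 + 1 = j := by omega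
    rw [e] at h3
    linarith
  set c : ℕ → ℝ := fun j => μ / h j + σh j / 2 with hc
  set d : ℕ → ℝ := fun j => μ / h j - σh j / 2 with hd
  have cpos : ∀ j, 1 ≤ j → j ≤ M → 0 < c j := by
    intro j h1 h2
    have := div_pos hμ (hhpos j h1 h2)
    have := hσ j h1 h2
    simp only [hc]
    linarith
  have key : ∀ j a b, 1 ≤ j → j ≤ M →
      (μ * (a - b) / h j + σh j * (a + b) / 2 = gh j ↔ c j * a = gh j + d j * b) := by
    intro j a b h1 h2
    have hj := (hhpos j h1 h2).ne'
    simp only [hc, hd]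
    constructor <;> intro E <;> field_simp at E ⊢ <;> nlinarith [E]
  set V : ℕ → ℝ := fun n =>
    Nat.rec 0 (fun j v => (gh (j + 1) + d (j + 1) * v) / c (j + 1)) n with hV
  have hV0 : V 0 = 0 := rfl
  have hVs : ∀ j, 1 ≤ j → j ≤ M → c j * V j = gh j + d j * V (j - 1) := by
    intro j h1 h2
    obtain ⟨j', rfl⟩ : ∃ j', j = j' + 1 := ⟨j - 1, by omega⟩
    have : V (j' + 1) = (gh (j' + 1) + d (j' + 1) * V j') / c (j' + 1) := rfl
    rw [this, mul_div_cancel₀ _ (cpos _ h1 h2).ne']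
    simp
  have Veq : ∀ j : ℕ, (hj : 1 ≤ j) → (hjM : j ≤ M) →
      μ * (V j - V (j - 1)) / h j + σh j * (V j + V (j - 1)) / 2 = gh j := by
    intro j h1 h2
    exact (key j _ _ h1 h2).mpr (hVs j h1 h2)
  have uniq : ∀ U : Fin (M + 1) → ℝ, U 0 = 0 →
      (∀ j : ℕ, (hj : 1 ≤ j) → (hjM : j ≤ M) →
        μ * (U ⟨j, by omega⟩ - U ⟨j - 1, by omega⟩) / h j
          + σh j * (U ⟨j, by omega⟩ + U ⟨j - 1, by omega⟩) / 2 = gh j) →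
      ∀ j, (hj : j ≤ M) → U ⟨j, by omega⟩ = V j := by
    intro U hU0 hUeq j
    induction j with
    | zero => intro _; simpa [hV0] using hU0
    | succ j ih =>
      intro hj
      have h1 : 1 ≤ j + 1 := by omega
      have E := (key (j + 1) _ _ h1 hj).mp (hUeq (j + 1) h1 hj)
      have e : j + 1 - 1 = j := by omega
      rw [show (⟨j + 1 - 1, by omega⟩ : Fin (M + 1)) = ⟨j, by omega⟩ from by simp,
        ih (by omega)] at E
      have : U ⟨j + 1, by omega⟩ = (gh (j + 1) + d (j + 1) * V j) / c (j + 1) := by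
        rw [eq_div_iff (cpos _ h1 hj).ne']
        linarith
      rw [this]
  refine ⟨⟨fun i => V i.1, ⟨hV0, ?_⟩, ?_⟩, ?_⟩
  · intro j h1 h2
    exact Veq j h1 h2
  · rintro U ⟨hU0, hUeq⟩
    funext i
    have := uniq U hU0 hUeq i.1 (by omega)
    simpa using this
  · intro U hU0 hUeq hmesh j
    set G : ℝ := (Finset.Icc 1 M).sup' (Finset.nonempty_Icc.mpr hM) fun j => |gh j|
      with hG
    have hG1 : |gh 1| ≤ G := by
      rw [hG]; exact le_sup' (fun j => |gh j|) (Finset.mem_Icc.mpr ⟨le_refl 1, hM⟩)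
    have hGnn : 0 ≤ G := le_trans (abs_nonneg _) hG1
    set K : ℝ := G / σmin with hK
    have hKnn : 0 ≤ K := div_nonneg hGnn hσmin.le
    have main : ∀ j, (hj : j ≤ M) → |U ⟨j, by omega⟩| ≤ K := by
      intro j
      induction j with
      | zero => intro _; simpa [hU0] using hKnn
      | succ j ih =>
        intro hj
        have h1 : 1 ≤ j + 1 := by omega
        have E := (key (j + 1) _ _ h1 hj).mp (hUeq (j + 1) h1 hj)
        rw [show (⟨j + 1 - 1, by omega⟩ : Fin (M + 1)) = ⟨j, by omega⟩ from by simp]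
          at E
        have hdnn : 0 ≤ d (j + 1) := by
          have hm := hmesh (j + 1) h1 hj
          have hσp : 0 < σh (j + 1) := lt_of_lt_of_le hσmin (hσ _ h1 hj)
          have hhp := hhpos (j + 1) h1 hj
          have : σh (j + 1) * h (j + 1) ≤ 2 * μ := by
            rw [le_div_iff₀ hσp] at hm; linarith
          simp only [hd]
          rw [sub_nonneg, div_le_div_iff₀ (by norm_num) hhp]
          linarith
        have hcp := cpos (j + 1) h1 hj
        have hihK := ih (by omega)
        have hgb : |gh (j + 1)| ≤ G := by
          rw [hG]; exact le_sup' (fun j => |gh j|) (Finset.mem_Icc.mpr (by omega))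
        have hσK : G ≤ σh (j + 1) * K := by
          have : σmin * K = G := by rw [hK, mul_div_assoc', mul_div_cancel_left₀ _ hσmin.ne']
          nlinarith [hσ (j + 1) h1 hj, hKnn]
        have step : c (j + 1) * |U ⟨j + 1, by omega⟩| ≤ c (j + 1) * K := by
          have habs : c (j + 1) * |U ⟨j + 1, by omega⟩|
              = |gh (j + 1) + d (j + 1) * U ⟨j, by omega⟩| := by
            rw [← E, abs_mul, abs_of_pos hcp]
          rw [habs]
          calc |gh (j + 1) + d (j + 1) * U ⟨j, by omega⟩|
              ≤ |gh (j + 1)| + d (j + 1) * |U ⟨j, by omega⟩| := by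
                refine le_trans (abs_add_le _ _) ?_
                rw [abs_mul, abs_of_nonneg hdnn]
            _ ≤ G + d (j + 1) * K := by
                have := mul_le_mul_of_nonneg_left hihK hdnn
                linarith
            _ ≤ σh (j + 1) * K + d (j + 1) * K := by linarith
            _ = c (j + 1) * K := by
                simp only [hc, hd]; ring
        exact le_of_mul_le_mul_left step hcp
    have := main j.1 (by omega)
    simpa using this
end
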